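/- arXiv:2208.01961 — 3 statements merged into one kernel-verified Lean document; each statement's English description precedes it below -/
import Mathlib

section
/- The running supremum is 1-Lipschitz in p-variation: Let T > 0 and p ≥ 1. For continuous functions w¹, w² : [0,T] → ℝ with w¹(0) = w²(0) = 0, define y^i(t) = sup_{0 ≤ s ≤ t} w^i(s) for i = 1, 2. Then ‖y¹ − y²‖_{p-var;[0,T]} ≤ ‖w¹ − w²‖_{p-var;[0,T]}. -/
open scoped ENNReal

/-- A finite partition of the interval `[a,b]`. -/
structure PVarPartition (a b : ℝ) where
  n : ℕ
  pts : Fin (n + 1) → ℝ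
  mono : Monotone pts
  first : pts 0 = a
  last : pts (Fin.last n) = b

/-- The `p`-variation (seminorm) of a path `X` over `[a,b]`, valued in `ℝ≥0∞`. -/
noncomputable def pVar {E : Type*} [NormedAddCommGroup E] (p : ℝ) (X : ℝ → E) (a b : ℝ) :
    ℝ≥0∞ :=
  ⨆ P : PVarPartition a b,
    (∑ i : Fin P.n, (ENNReal.ofReal ‖X (P.pts i.succ) - X (P.pts i.castSucc)‖) ^ p) ^ (1 / p)

open Set

namespace RunSupAux

/-- `a^p + b^p ≤ (a+b)^p` for nonneg reals, `p ≥ 1`. -/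
lemma add_rpow_le {x y p : ℝ} (hx : 0 ≤ x) (hy : 0 ≤ y) (hp : 1 ≤ p) :
    x ^ p + y ^ p ≤ (x + y) ^ p := by
  lift x to NNReal using hx
  lift y to NNReal using hy
  exact_mod_cast NNReal.add_rpow_le_rpow_add x y hp

noncomputable def runF (w₁ w₂ : ℝ → ℝ) : ℝ → ℝ :=
  fun t => sSup (w₁ '' Icc 0 t) - sSup (w₂ '' Icc 0 t)

def runG (w₁ w₂ : ℝ → ℝ) : ℝ → ℝ := fun t => w₁ t - w₂ t

lemma runF_swap (w₁ w₂ : ℝ → ℝ) (x : ℝ) : runF w₂ w₁ x = - runF w₁ w₂ x := by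
  simp [runF, neg_sub]

lemma runG_swap (w₁ w₂ : ℝ → ℝ) (x : ℝ) : runG w₂ w₁ x = - runG w₁ w₂ x := by
  simp [runG, neg_sub]

/-- Real-valued `p`-variation sum along a partition. -/
noncomputable def rSum (p : ℝ) (X : ℝ → ℝ) {a b : ℝ} (Q : PVarPartition a b) : ℝ :=
  ∑ i : Fin Q.n, |X (Q.pts i.succ) - X (Q.pts i.castSucc)| ^ p

/-- Append a point `c ≥ b` to a partition of `[a,b]`, giving a partition of `[a,c]`. -/
def psnoc {a b : ℝ} (Q : PVarPartition a b) (c : ℝ) (hbc : b ≤ c) : PVarPartition a c where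
  n := Q.n + 1
  pts := fun i => if h : (i : ℕ) ≤ Q.n then Q.pts ⟨i, by omega⟩ else c
  mono := by
    intro i j hij
    have hij' : (i : ℕ) ≤ (j : ℕ) := hij
    by_cases hi : (i : ℕ) ≤ Q.n
    · by_cases hj : (j : ℕ) ≤ Q.n
      · simp only [dif_pos hi, dif_pos hj]
        exact Q.mono (by exact hij')
      · simp only [dif_pos hi, dif_neg hj]
        calc Q.pts ⟨i, by omega⟩ ≤ Q.pts (Fin.last Q.n) := Q.mono (Fin.le_last _)
          _ = b := Q.last
          _ ≤ c := hbc
    · have hj : ¬ (j : ℕ) ≤ Q.n := fun h => hi (le_trans hij' h)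
      simp [dif_neg hi, dif_neg hj]
  first := by
    have h0 : ((0 : Fin (Q.n + 1 + 1)) : ℕ) = 0 := rfl
    simp only [h0, dif_pos (Nat.zero_le Q.n)]
    exact Q.first
  last := by
    have h : ¬ ((Fin.last (Q.n + 1) : Fin (Q.n + 2)) : ℕ) ≤ Q.n := by
      simp [Fin.last]
    simp [dif_neg h]

lemma snocP_sum (p : ℝ) (X : ℝ → ℝ) {a b : ℝ} (Q : PVarPartition a b) (c : ℝ) (hbc : b ≤ c) :
    rSum p X (psnoc Q c hbc) = rSum p X Q + |X c - X b| ^ p := by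
  have hpts : ∀ i : Fin (Q.n + 1), (psnoc Q c hbc).pts i.castSucc = Q.pts i := by
    intro i
    have hival : ((i.castSucc : Fin (Q.n + 2)) : ℕ) = (i : ℕ) := Fin.coe_castSucc i
    have hi : ((i.castSucc : Fin (Q.n + 2)) : ℕ) ≤ Q.n := by
      rw [hival]; have := i.isLt; omega
    simp only [psnoc]
    rw [dif_pos hi]
    exact congrArg Q.pts (Fin.ext hival)
  have hlastpt : (psnoc Q c hbc).pts (Fin.last (Q.n + 1)) = c := (psnoc Q c hbc).last
  unfold rSum
  show (∑ i : Fin (Q.n + 1), |X ((psnoc Q c hbc).pts i.succ) -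
      X ((psnoc Q c hbc).pts i.castSucc)| ^ p) = _
  rw [Fin.sum_univ_castSucc]
  congr 1
  · refine Finset.sum_congr rfl fun i _ => ?_
    rw [Fin.succ_castSucc, hpts i.succ, hpts i.castSucc]
  · rw [Fin.succ_last, hlastpt, hpts (Fin.last Q.n), Q.last]

variable {T : ℝ}

lemma exists_argmax (w : ℝ → ℝ) (hw : ContinuousOn w (Icc 0 T)) {t : ℝ}
    (ht : t ∈ Icc (0 : ℝ) T) :
    ∃ x ∈ Icc (0 : ℝ) t, (∀ z ∈ Icc (0 : ℝ) t, w z ≤ w x) ∧ sSup (w '' Icc 0 t) = w x := by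
  obtain ⟨x, hx, hmax⟩ := isCompact_Icc.exists_isMaxOn (s := Icc (0:ℝ) t)
    ⟨0, left_mem_Icc.mpr ht.1⟩ (hw.mono (Icc_subset_Icc le_rfl ht.2))
  rw [isMaxOn_iff] at hmax
  refine ⟨x, hx, hmax, ?_⟩
  exact IsGreatest.csSup_eq ⟨mem_image_of_mem w hx, by rintro _ ⟨z, hz, rfl⟩; exact hmax z hz⟩

lemma runF_le (w₁ w₂ : ℝ → ℝ) (hw₂ : ContinuousOn w₂ (Icc 0 T)) {t : ℝ}
    (ht : t ∈ Icc (0 : ℝ) T) {α : ℝ} (hα : α ∈ Icc (0 : ℝ) t)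
    (hm : ∀ z ∈ Icc (0 : ℝ) t, w₁ z ≤ w₁ α) :
    runF w₁ w₂ t ≤ runG w₁ w₂ α := by
  obtain ⟨β, hβ, hβm, hβs⟩ := exists_argmax w₂ hw₂ ht
  have h1 : sSup (w₁ '' Icc 0 t) = w₁ α :=
    IsGreatest.csSup_eq ⟨mem_image_of_mem _ hα, by rintro _ ⟨z, hz, rfl⟩; exact hm z hz⟩
  simp only [runF, runG, h1, hβs]
  linarith [hβm α hα]

/-- One step of the induction (stated for the "+" state; the "−" state is obtained by
swapping `w₁` and `w₂`). -/
lemma step {p : ℝ} (hp : 1 ≤ p) (w₁ w₂ : ℝ → ℝ)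
    (hw₁ : ContinuousOn w₁ (Icc 0 T)) (hw₂ : ContinuousOn w₂ (Icc 0 T))
    {s s' : ℝ} (hs : s ∈ Icc (0 : ℝ) T) (hs' : s' ∈ Icc (0 : ℝ) T) (hss' : s ≤ s')
    {c r : ℝ} (hr : 0 ≤ r) (hc : 0 ≤ c)
    (hcert : r ≤ runF w₁ w₂ s - runG w₁ w₂ c)
    (hα : ∃ α ∈ Icc c s, ∀ z ∈ Icc (0 : ℝ) s, w₁ z ≤ w₁ α) :
    (∃ r', 0 ≤ r' ∧
        r ^ p + |runF w₁ w₂ s' - runF w₁ w₂ s| ^ p ≤ r' ^ p ∧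
        r' ≤ runF w₁ w₂ s' - runG w₁ w₂ c ∧
        ∃ α' ∈ Icc c s', ∀ z ∈ Icc (0 : ℝ) s', w₁ z ≤ w₁ α') ∨
    (∃ c' r', 0 ≤ r' ∧ c ≤ c' ∧ c' ≤ s' ∧
        r ^ p + |runF w₁ w₂ s' - runF w₁ w₂ s| ^ p ≤
          |runG w₁ w₂ c' - runG w₁ w₂ c| ^ p + r' ^ p ∧
        r' ≤ runG w₁ w₂ c' - runF w₁ w₂ s' ∧
        ∃ β' ∈ Icc c' s', ∀ z ∈ Icc (0 : ℝ) s', w₂ z ≤ w₂ β') := by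
  obtain ⟨α, hαI, hαm⟩ := hα
  set F := runF w₁ w₂ with hF
  set G := runG w₁ w₂ with hG
  obtain ⟨a1, ha1I, ha1m, ha1s⟩ := exists_argmax w₁ hw₁ hs'
  obtain ⟨b1, hb1I, hb1m, hb1s⟩ := exists_argmax w₂ hw₂ hs'
  obtain ⟨a0, ha0I, ha0m, ha0s⟩ := exists_argmax w₁ hw₁ hs
  obtain ⟨b0, hb0I, hb0m, hb0s⟩ := exists_argmax w₂ hw₂ hs
  have hFs : F s = w₁ a0 - w₂ b0 := by simp only [hF, runF, ha0s, hb0s]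
  have hFs' : F s' = w₁ a1 - w₂ b1 := by simp only [hF, runF, ha1s, hb1s]
  rcases le_or_gt (F s) (F s') with hinc | hdec
  · -- increment is nonnegative: stay in the "+" state
    left
    refine ⟨r + (F s' - F s), by linarith, ?_, by linarith, ?_⟩
    · rw [abs_of_nonneg (by linarith)]
      exact add_rpow_le hr (by linarith) hp
    · by_cases h1 : w₁ a1 ≤ w₁ α
      · exact ⟨α, ⟨hαI.1, le_trans hαI.2 hss'⟩,
          fun z hz => le_trans (ha1m z hz) h1⟩
      · refine ⟨a1, ⟨?_, ha1I.2⟩, ha1m⟩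
        by_contra hca
        push_neg at hca
        have ha1s'' : a1 ∈ Icc (0:ℝ) s := ⟨ha1I.1, le_trans (le_of_lt hca) (le_trans hαI.1 hαI.2)⟩
        exact h1 (hαm a1 ha1s'')
  · -- increment is negative: commit `α` and switch to the "−" state
    right
    have hαI0 : α ∈ Icc (0 : ℝ) s := ⟨le_trans hc hαI.1, hαI.2⟩
    have hFsle : F s ≤ G α := runF_le w₁ w₂ hw₂ hs hαI0 hαm
    have hb1gt : s < b1 := by
      by_contra hb1le
      push_neg at hb1le
      have h1 : w₂ b1 ≤ w₂ b0 := hb0m b1 ⟨hb1I.1, hb1le⟩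
      have h2 : w₁ a0 ≤ w₁ a1 := ha1m a0 ⟨ha0I.1, le_trans ha0I.2 hss'⟩
      have : F s ≤ F s' := by rw [hFs, hFs']; linarith
      linarith
    refine ⟨α, F s - F s', by linarith, hαI.1, le_trans hαI.2 hss', ?_, by linarith,
      b1, ⟨le_trans (le_trans hαI.2 (le_of_lt hb1gt)) le_rfl, hb1I.2⟩, hb1m⟩
    have h3 : r ≤ G α - G c := by linarith
    have h4 : r ^ p ≤ |G α - G c| ^ p :=
      Real.rpow_le_rpow hr (le_trans h3 (le_abs_self _)) (by linarith)
    have h5 : |F s' - F s| = F s - F s' := by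
      rw [abs_of_nonpos (by linarith)]; ring
    rw [h5]
    linarith

end RunSupAux

open RunSupAux

/-- The running supremum is `1`-Lipschitz in `p`-variation. -/
theorem running_sup_lipschitz_pvar (T p : ℝ) (hT : 0 < T) (hp : 1 ≤ p)
    (w₁ w₂ : ℝ → ℝ)
    (hw₁ : ContinuousOn w₁ (Set.Icc 0 T)) (hw₂ : ContinuousOn w₂ (Set.Icc 0 T))
    (hw₁0 : w₁ 0 = 0) (hw₂0 : w₂ 0 = 0) :
    pVar p (fun t => sSup (w₁ '' Set.Icc 0 t) - sSup (w₂ '' Set.Icc 0 t)) 0 T ≤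
      pVar p (fun t => w₁ t - w₂ t) 0 T := by
  classical
  set F : ℝ → ℝ := runF w₁ w₂ with hFdef
  set G : ℝ → ℝ := runG w₁ w₂ with hGdef
  -- main combinatorial claim
  have key : ∀ P : PVarPartition (0 : ℝ) T, ∃ Q : PVarPartition (0 : ℝ) T,
      rSum p F P ≤ rSum p G Q := by
    intro P
    set N := P.n with hN
    have hminlt : ∀ k : ℕ, min k N < N + 1 := fun k => by omega
    set t : ℕ → ℝ := fun k => P.pts ⟨min k N, hminlt k⟩ with ht
    have htmono : ∀ {k l : ℕ}, k ≤ l → t k ≤ t l := by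
      intro k l hkl
      exact P.mono (by simp [Fin.le_def]; omega)
    have ht0 : t 0 = 0 := by
      have : (⟨min 0 N, hminlt 0⟩ : Fin (N + 1)) = 0 := by
        apply Fin.ext; simp
      rw [ht]; simp only [this]; exact P.first
    have htN : t N = T := by
      have : (⟨min N N, hminlt N⟩ : Fin (N + 1)) = Fin.last N := by
        apply Fin.ext; simp [Fin.last]
      rw [ht]; simp only [this]; exact P.last
    have htIcc : ∀ k, t k ∈ Set.Icc (0 : ℝ) T := by
      intro k
      constructor
      · rw [← ht0]; exact htmono (Nat.zero_le k)
      · calc t k = P.pts ⟨min k N, hminlt k⟩ := rfl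
          _ ≤ P.pts (Fin.last N) := P.mono (Fin.le_last _)
          _ = T := P.last
    set A : ℕ → ℝ := fun k => ∑ i ∈ Finset.range k, |F (t (i + 1)) - F (t i)| ^ p with hA
    -- invariant-maintaining induction
    have inv : ∀ k : ℕ, k ≤ N → ∃ (c : ℝ) (Q : PVarPartition (0 : ℝ) c) (r : ℝ),
        0 ≤ r ∧ 0 ≤ c ∧ c ≤ t k ∧ A k ≤ rSum p G Q + r ^ p ∧
        ((r ≤ runF w₁ w₂ (t k) - runG w₁ w₂ c ∧
            ∃ α ∈ Set.Icc c (t k), ∀ z ∈ Set.Icc (0 : ℝ) (t k), w₁ z ≤ w₁ α) ∨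
         (r ≤ runF w₂ w₁ (t k) - runG w₂ w₁ c ∧
            ∃ β ∈ Set.Icc c (t k), ∀ z ∈ Set.Icc (0 : ℝ) (t k), w₂ z ≤ w₂ β)) := by
      intro k
      induction k with
      | zero =>
        intro _
        refine ⟨0, ⟨0, fun _ => 0, monotone_const, rfl, rfl⟩, 0, le_rfl, le_rfl,
          ht0.ge, ?_, Or.inl ⟨?_, 0, ?_, ?_⟩⟩
        · have : A 0 = 0 := by simp [hA]
          rw [this, Real.zero_rpow (by linarith : p ≠ 0)]
          have : rSum p G ⟨0, fun _ => 0, monotone_const, rfl, rfl⟩ = 0 := by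
            simp [rSum]
          simp [this]
        · rw [ht0]
          have h1 : Set.Icc (0:ℝ) 0 = {0} := Set.Icc_self 0
          simp only [runF, runG, h1, Set.image_singleton, csSup_singleton]
          linarith
        · rw [ht0]; exact Set.mem_Icc.mpr ⟨le_rfl, le_rfl⟩
        · rw [ht0]
          intro z hz
          have : z = 0 := le_antisymm hz.2 hz.1
          rw [this]
      | succ k ih =>
        intro hk1
        obtain ⟨c, Q, r, hr, hc, hcle, hAle, hcert⟩ := ih (by omega)
        have hss' : t k ≤ t (k + 1) := htmono (Nat.le_succ k)
        have hAstep : A (k + 1) = A k + |F (t (k + 1)) - F (t k)| ^ p := by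
          rw [hA]; exact Finset.sum_range_succ _ k
        rcases hcert with ⟨hcert, hαex⟩ | ⟨hcert, hβex⟩
        · -- "+" state
          rcases step hp w₁ w₂ hw₁ hw₂ (htIcc k) (htIcc (k + 1)) hss' hr hc hcert hαex with
            ⟨r', hr', hsum, hcert', hα'⟩ | ⟨c', r', hr', hcc', hc's', hsum, hcert', hβ'⟩
          · exact ⟨c, Q, r', hr', hc, le_trans hcle hss', by
              rw [hAstep]; have := hAle; simp only [hFdef] at *; linarith,
              Or.inl ⟨hcert', hα'⟩⟩
          · refine ⟨c', psnoc Q c' hcc', r', hr', le_trans hc hcc', hc's', ?_, ?_⟩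
            · rw [hAstep, snocP_sum]
              have hlast : runG w₂ w₁ c' - runG w₂ w₁ c = -(runG w₁ w₂ c' - runG w₁ w₂ c) := by
                rw [runG_swap w₁ w₂ c', runG_swap w₁ w₂ c]; ring
              simp only [hFdef, hGdef] at *
              linarith
            · refine Or.inr ⟨?_, hβ'⟩
              have h1 : runF w₂ w₁ (t (k+1)) = - runF w₁ w₂ (t (k+1)) := runF_swap _ _ _
              have h2 : runG w₂ w₁ c' = - runG w₁ w₂ c' := runG_swap _ _ _
              rw [h1, h2]; linarith
        · -- "−" state: apply `step` with the roles of `w₁, w₂` swapped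
          have habs : |runF w₂ w₁ (t (k+1)) - runF w₂ w₁ (t k)| = |F (t (k+1)) - F (t k)| := by
            rw [runF_swap w₁ w₂ (t (k+1)), runF_swap w₁ w₂ (t k), hFdef]
            rw [show -runF w₁ w₂ (t (k+1)) - -runF w₁ w₂ (t k)
              = -(runF w₁ w₂ (t (k+1)) - runF w₁ w₂ (t k)) by ring, abs_neg]
          rcases step hp w₂ w₁ hw₂ hw₁ (htIcc k) (htIcc (k + 1)) hss' hr hc hcert hβex with
            ⟨r', hr', hsum, hcert', hβ'⟩ | ⟨c', r', hr', hcc', hc's', hsum, hcert', hα'⟩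
          · refine ⟨c, Q, r', hr', hc, le_trans hcle hss', ?_, Or.inr ⟨hcert', hβ'⟩⟩
            rw [hAstep]
            rw [habs] at hsum
            linarith
          · refine ⟨c', psnoc Q c' hcc', r', hr', le_trans hc hcc', hc's', ?_, ?_⟩
            · rw [hAstep, snocP_sum]
              rw [habs] at hsum
              have hlast : |runG w₂ w₁ c' - runG w₂ w₁ c| = |runG w₁ w₂ c' - runG w₁ w₂ c| := by
                rw [runG_swap w₁ w₂ c', runG_swap w₁ w₂ c,
                  show -runG w₁ w₂ c' - -runG w₁ w₂ c = -(runG w₁ w₂ c' - runG w₁ w₂ c) by ring,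
                  abs_neg]
              rw [hlast] at hsum
              simp only [hGdef] at *
              linarith
            · refine Or.inl ⟨?_, hα'⟩
              have h1 : runG w₂ w₁ c' = - runG w₁ w₂ c' := runG_swap _ _ _
              have h2 : runF w₂ w₁ (t (k+1)) = - runF w₁ w₂ (t (k+1)) := runF_swap _ _ _
              rw [h1, h2] at hcert'
              linarith
    -- final assembly
    obtain ⟨c, Q, r, hr, hc, hcle, hAle, hcert⟩ := inv N le_rfl
    rw [htN] at hcle hcert
    have hAN : rSum p F P = A N := by
      have h0 : A N = ∑ i ∈ Finset.range N, |F (t (i + 1)) - F (t i)| ^ p := rfl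
      rw [h0, ← Fin.sum_univ_eq_sum_range (fun i => |F (t (i + 1)) - F (t i)| ^ p) N]
      unfold rSum
      refine Finset.sum_congr rfl fun i _ => ?_
      have h1 : t ((i : ℕ) + 1) = P.pts i.succ := by
        show P.pts ⟨min ((i : ℕ) + 1) N, hminlt _⟩ = P.pts i.succ
        refine congrArg P.pts (Fin.ext ?_)
        show min ((i : ℕ) + 1) N = (i : ℕ) + 1
        have h := i.isLt
        omega
      have h2 : t (i : ℕ) = P.pts i.castSucc := by
        show P.pts ⟨min (i : ℕ) N, hminlt _⟩ = P.pts i.castSucc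
        refine congrArg P.pts (Fin.ext ?_)
        show min (i : ℕ) N = (i : ℕ)
        have h := i.isLt
        omega
      rw [h1, h2]
    rcases hcert with ⟨hcert, α, hαI, hαm⟩ | ⟨hcert, β, hβI, hβm⟩
    · have hαT : α ∈ Set.Icc (0 : ℝ) T := ⟨le_trans hc hαI.1, hαI.2⟩
      have hFle : runF w₁ w₂ T ≤ runG w₁ w₂ α :=
        runF_le w₁ w₂ hw₂ (Set.mem_Icc.mpr ⟨le_of_lt hT, le_rfl⟩) hαT hαm
      refine ⟨psnoc (psnoc Q α hαI.1) T hαI.2, ?_⟩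
      rw [snocP_sum, snocP_sum, hAN]
      have h3 : r ≤ runG w₁ w₂ α - runG w₁ w₂ c := by linarith
      have h4 : r ^ p ≤ |runG w₁ w₂ α - runG w₁ w₂ c| ^ p :=
        Real.rpow_le_rpow hr (le_trans h3 (le_abs_self _)) (by linarith)
      have h5 : (0:ℝ) ≤ |runG w₁ w₂ T - runG w₁ w₂ α| ^ p :=
        Real.rpow_nonneg (abs_nonneg _) p
      simp only [hGdef] at *
      linarith
    · have hβT : β ∈ Set.Icc (0 : ℝ) T := ⟨le_trans hc hβI.1, hβI.2⟩
      have hFle : runF w₂ w₁ T ≤ runG w₂ w₁ β :=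
        runF_le w₂ w₁ hw₁ (Set.mem_Icc.mpr ⟨le_of_lt hT, le_rfl⟩) hβT hβm
      refine ⟨psnoc (psnoc Q β hβI.1) T hβI.2, ?_⟩
      rw [snocP_sum, snocP_sum, hAN]
      have h3 : r ≤ runG w₂ w₁ β - runG w₂ w₁ c := by linarith
      have h3' : r ≤ runG w₁ w₂ c - runG w₁ w₂ β := by
        rw [runG_swap w₁ w₂ β, runG_swap w₁ w₂ c] at h3; linarith
      have h4 : r ^ p ≤ |runG w₁ w₂ β - runG w₁ w₂ c| ^ p := by
        refine Real.rpow_le_rpow hr ?_ (by linarith)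
        rw [abs_sub_comm]
        exact le_trans h3' (le_abs_self _)
      have h5 : (0:ℝ) ≤ |runG w₁ w₂ T - runG w₁ w₂ β| ^ p :=
        Real.rpow_nonneg (abs_nonneg _) p
      simp only [hGdef] at *
      linarith
  -- conversion between the ENNReal sums and the real sums
  have conv : ∀ (X : ℝ → ℝ) (Q : PVarPartition (0 : ℝ) T),
      (∑ i : Fin Q.n, (ENNReal.ofReal ‖X (Q.pts i.succ) - X (Q.pts i.castSucc)‖) ^ p)
        = ENNReal.ofReal (rSum p X Q) := by
    intro X Q
    rw [rSum, ENNReal.ofReal_sum_of_nonneg (fun i _ => Real.rpow_nonneg (abs_nonneg _) p)]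
    refine Finset.sum_congr rfl fun i _ => ?_
    rw [Real.norm_eq_abs, ENNReal.ofReal_rpow_of_nonneg (abs_nonneg _) (by linarith)]
  have hFeq : (fun t => sSup (w₁ '' Set.Icc 0 t) - sSup (w₂ '' Set.Icc 0 t)) = F := rfl
  have hGeq : (fun t => w₁ t - w₂ t) = G := rfl
  rw [hFeq, hGeq, pVar, pVar]
  refine iSup_le fun P => ?_
  obtain ⟨Q, hQ⟩ := key P
  calc (∑ i : Fin P.n, (ENNReal.ofReal ‖F (P.pts i.succ) - F (P.pts i.castSucc)‖) ^ p) ^ (1/p)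
      = (ENNReal.ofReal (rSum p F P)) ^ (1/p) := by rw [conv]
    _ ≤ (ENNReal.ofReal (rSum p G Q)) ^ (1/p) := by
        exact ENNReal.rpow_le_rpow (ENNReal.ofReal_le_ofReal hQ) (by positivity)
    _ = (∑ i : Fin Q.n, (ENNReal.ofReal ‖G (Q.pts i.succ) - G (Q.pts i.castSucc)‖) ^ p) ^ (1/p) := by
        rw [conv]
    _ ≤ _ := le_iSup (fun Q : PVarPartition (0:ℝ) T =>
        (∑ i : Fin Q.n, (ENNReal.ofReal ‖G (Q.pts i.succ) - G (Q.pts i.castSucc)‖) ^ p) ^ (1/p)) Q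
end

section
/- Contraction and Lipschitz estimates in p-variation for the perturbed-path fixed point map: Let T > 0, p ≥ 1 and α < 1, β < 1. For continuous functions w, m : [0,T] → ℝ with w(0) = 0, define φ⁺(w,m)(t) = (1/(1−α)) · sup_{s ≤ t} ( w(s) − (β/(1−β)) · sup_{u ≤ s} ( −w(u) − α m(u) ) ). Then for all continuous w, w', m, m' : [0,T] → ℝ with w(0) = w'(0) = 0 and all t ∈ [0,T]: (i) ‖φ⁺(w,m) − φ⁺(w,m')‖_{p-var;[0,t]} ≤ ρ(α,β) ‖m − m'‖_{p-var;[0,t]}, where ρ(α,β) = |αβ| / ((1−α)(1−β)); and (ii) there exists a constant C_{α,β}, depending only on α and β, such that ‖φ⁺(w,m) − φ⁺(w',m)‖_{p-var;[0,t]} ≤ C_{α,β} ‖w − w'‖_{p-var;[0,t]}. -/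
open scoped ENNReal

/-- The perturbed-path fixed point map
`φ⁺(w,m)(t) = (1/(1-α)) sup_{s ≤ t} ( w(s) - (β/(1-β)) sup_{u ≤ s} (-w(u) - α m(u)) )`. -/
noncomputable def phiPlus (α β : ℝ) (w m : ℝ → ℝ) (t : ℝ) : ℝ :=
  (1 / (1 - α)) *
    sSup ((fun s => w s - (β / (1 - β)) *
      sSup ((fun u => -w u - α * m u) '' Set.Icc 0 s)) '' Set.Icc 0 t)

open Set
open scoped NNReal

/-- Sum `∑ |X y_{i+1} - X y_i|^p` along a list of times. -/
noncomputable def vsum (p : ℝ) (X : ℝ → ℝ) : List ℝ → ℝ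
  | a :: b :: l => |X b - X a| ^ p + vsum p X (b :: l)
  | _ => 0

/-- Strict alternation of the increments of `X` along a list. -/
def AltP (X : ℝ → ℝ) : List ℝ → Prop
  | a :: b :: c :: l => (X b - X a) * (X c - X b) < 0 ∧ AltP X (b :: c :: l)
  | _ => True

theorem vsum_nil (p : ℝ) (X : ℝ → ℝ) : vsum p X [] = 0 := rfl
theorem vsum_single (p : ℝ) (X : ℝ → ℝ) (a : ℝ) : vsum p X [a] = 0 := rfl
theorem vsum_cons₂ (p : ℝ) (X : ℝ → ℝ) (a b : ℝ) (l : List ℝ) :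
    vsum p X (a :: b :: l) = |X b - X a| ^ p + vsum p X (b :: l) := rfl

theorem vsum_nonneg (p : ℝ) (X : ℝ → ℝ) : ∀ l : List ℝ, 0 ≤ vsum p X l
  | [] => le_refl 0
  | [_] => le_refl 0
  | a :: b :: l => by
    rw [vsum_cons₂]
    exact add_nonneg (Real.rpow_nonneg (abs_nonneg _) p) (vsum_nonneg p X (b :: l))

theorem vsum_le_cons (p : ℝ) (X : ℝ → ℝ) (a : ℝ) : ∀ l : List ℝ, vsum p X l ≤ vsum p X (a :: l)
  | [] => le_refl 0
  | b :: l => by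
    rw [vsum_cons₂]
    exact le_add_of_nonneg_left (Real.rpow_nonneg (abs_nonneg _) p)

theorem vsum_le_concat (p : ℝ) (X : ℝ → ℝ) (t : ℝ) :
    ∀ l : List ℝ, vsum p X l ≤ vsum p X (l ++ [t])
  | [] => by simp [vsum]
  | [a] => by
    simp only [List.cons_append, List.nil_append, vsum_single, vsum_cons₂, vsum_nil]
    positivity
  | a :: b :: l => by
    simp only [List.cons_append, vsum_cons₂]
    have := vsum_le_concat p X t (b :: l)
    simp only [List.cons_append] at this
    linarith

/-- real superadditivity of rpow -/
theorem rpow_superadd {u v p : ℝ} (hu : 0 ≤ u) (hv : 0 ≤ v) (hp : 1 ≤ p) :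
    u ^ p + v ^ p ≤ (u + v) ^ p := by
  have h := NNReal.add_rpow_le_rpow_add u.toNNReal v.toNNReal hp
  have h2 : ((u.toNNReal + v.toNNReal : ℝ≥0) : ℝ) = u + v := by
    push_cast [Real.coe_toNNReal _ hu, Real.coe_toNNReal _ hv]; ring
  calc u ^ p + v ^ p = ((u.toNNReal ^ p + v.toNNReal ^ p : ℝ≥0) : ℝ) := by
        push_cast [NNReal.coe_rpow, Real.coe_toNNReal _ hu, Real.coe_toNNReal _ hv]; ring
    _ ≤ (((u.toNNReal + v.toNNReal) ^ p : ℝ≥0) : ℝ) := by exact_mod_cast h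
    _ = (u + v) ^ p := by rw [NNReal.coe_rpow, h2]

theorem abs_add_of_mul_nonneg {u v : ℝ} (huv : 0 ≤ u * v) : |u + v| = |u| + |v| := by
  rcases mul_nonneg_iff.1 huv with ⟨hu, hv⟩ | ⟨hu, hv⟩
  · rw [abs_of_nonneg hu, abs_of_nonneg hv, abs_of_nonneg (by linarith)]
  · rw [abs_of_nonpos hu, abs_of_nonpos hv, abs_of_nonpos (by linarith)]; ring

/-- merging two same-signed increments does not decrease the variation sum -/
theorem vsum_merge_le {p : ℝ} (hp : 1 ≤ p) (X : ℝ → ℝ) (a b c : ℝ) (l : List ℝ)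
    (h : 0 ≤ (X b - X a) * (X c - X b)) :
    vsum p X (a :: b :: c :: l) ≤ vsum p X (a :: c :: l) := by
  rw [vsum_cons₂, vsum_cons₂, vsum_cons₂]
  have key : |X b - X a| ^ p + |X c - X b| ^ p ≤ |X c - X a| ^ p := by
    have : X c - X a = (X b - X a) + (X c - X b) := by ring
    rw [this, abs_add_of_mul_nonneg h]
    exact rpow_superadd (abs_nonneg _) (abs_nonneg _) hp
  linarith

theorem vsum_append_cons (p : ℝ) (X : ℝ → ℝ) (m : ℝ) :
    ∀ (l₁ l₂ : List ℝ), vsum p X (l₁ ++ m :: l₂) = vsum p X (l₁ ++ [m]) + vsum p X (m :: l₂)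
  | [], l₂ => by simp [vsum]
  | [a], l₂ => by simp [vsum_cons₂, vsum_single, vsum_nil]
  | a :: b :: l₁, l₂ => by
    simp only [List.cons_append, vsum_cons₂]
    have := vsum_append_cons p X m (b :: l₁) l₂
    simp only [List.cons_append] at this
    linarith

theorem AltP_tail (X : ℝ → ℝ) : ∀ {a : ℝ} {l : List ℝ}, AltP X (a :: l) → AltP X l
  | _, [], _ => trivial
  | _, [_], _ => trivial
  | _, _ :: _ :: _, h => h.2

/-- if a list is not alternating, we can locate a non-alternating adjacent triple -/
theorem find_flat (X : ℝ → ℝ) : ∀ (l : List ℝ), ¬ AltP X l →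
    ∃ (l₁ : List ℝ) (a b c : ℝ) (l₂ : List ℝ),
      l = l₁ ++ a :: b :: c :: l₂ ∧ 0 ≤ (X b - X a) * (X c - X b)
  | [], h => absurd trivial h
  | [_], h => absurd trivial h
  | [_, _], h => absurd trivial h
  | a :: b :: c :: l, h => by
    by_cases h1 : (X b - X a) * (X c - X b) < 0
    · have h2 : ¬ AltP X (b :: c :: l) := fun hy => h ⟨h1, hy⟩
      obtain ⟨l₁, a', b', c', l₂, heq, hge⟩ := find_flat X (b :: c :: l) h2
      exact ⟨a :: l₁, a', b', c', l₂, by rw [List.cons_append, ← heq], hge⟩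
    · exact ⟨[], a, b, c, l, rfl, le_of_not_gt h1⟩

theorem alt_reduce {p : ℝ} (hp : 1 ≤ p) (X : ℝ → ℝ) (s : Set ℝ) :
    ∀ (n : ℕ) (l : List ℝ), l.length ≤ n → l.Chain' (· ≤ ·) → (∀ x ∈ l, x ∈ s) →
    ∃ l' : List ℝ, l'.Chain' (· ≤ ·) ∧ (∀ x ∈ l', x ∈ s) ∧ AltP X l' ∧ vsum p X l ≤ vsum p X l' := by
  intro n
  induction n with
  | zero =>
    intro l hl hc hm
    rw [Nat.le_zero, List.length_eq_zero_iff] at hl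
    subst hl
    exact ⟨[], List.isChain_nil, by simp, trivial, le_refl _⟩
  | succ n ih =>
    intro l hl hc hm
    by_cases hA : AltP X l
    · exact ⟨l, hc, hm, hA, le_refl _⟩
    obtain ⟨l₁, a, b, c, l₂, heq, hge⟩ := find_flat X l hA
    subst heq
    -- chain' decomposition
    simp only [List.Chain'] at hc
    rw [List.isChain_append] at hc
    obtain ⟨hc₁, hc₂, hlink⟩ := hc
    have hab : a ≤ b := (List.isChain_cons_cons.1 hc₂).1
    have hbc : b ≤ c := (List.isChain_cons_cons.1 (List.isChain_cons_cons.1 hc₂).2).1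
    have hc₂' : (a :: c :: l₂).Chain' (· ≤ ·) :=
      List.isChain_cons_cons.2 ⟨le_trans hab hbc, (List.isChain_cons_cons.1 (List.isChain_cons_cons.1 hc₂).2).2⟩
    have hcm : (l₁ ++ a :: c :: l₂).Chain' (· ≤ ·) := by
      simp only [List.Chain']
      rw [List.isChain_append]
      exact ⟨hc₁, hc₂', by simpa using hlink⟩
    have hmm : ∀ x ∈ l₁ ++ a :: c :: l₂, x ∈ s := by
      intro x hx
      apply hm
      simp only [List.mem_append, List.mem_cons] at hx ⊢
      tauto
    have hlen : (l₁ ++ a :: c :: l₂).length ≤ n := by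
      simp only [List.length_append, List.length_cons] at hl ⊢
      omega
    obtain ⟨l', h1, h2, h3, h4⟩ := ih (l₁ ++ a :: c :: l₂) hlen hcm hmm
    refine ⟨l', h1, h2, h3, le_trans ?_ h4⟩
    rw [vsum_append_cons p X a l₁ (b :: c :: l₂), vsum_append_cons p X a l₁ (c :: l₂)]
    have := vsum_merge_le hp X a b c l₂ hge
    linarith

/-- running supremum over `[0,x]` -/
noncomputable def runSup (f : ℝ → ℝ) (x : ℝ) : ℝ := sSup (f '' Set.Icc 0 x)
/-- difference of running suprema -/
noncomputable def rdiff (f g : ℝ → ℝ) (x : ℝ) : ℝ := runSup f x - runSup g x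

section Basics
variable {t : ℝ} {f : ℝ → ℝ}

theorem le_runSup (hf : ContinuousOn f (Icc 0 t)) {x u : ℝ} (hx : x ∈ Icc 0 t)
    (hu : u ∈ Icc 0 x) : f u ≤ runSup f x :=
  le_csSup (isCompact_Icc.bddAbove_image (hf.mono (Icc_subset_Icc_right hx.2)))
    (mem_image_of_mem f hu)

theorem runSup_mono (hf : ContinuousOn f (Icc 0 t)) {a b : ℝ} (ha : 0 ≤ a) (hab : a ≤ b)
    (hb : b ≤ t) : runSup f a ≤ runSup f b :=
  csSup_le_csSup (isCompact_Icc.bddAbove_image (hf.mono (Icc_subset_Icc_right hb)))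
    ⟨f 0, mem_image_of_mem f (left_mem_Icc.2 ha)⟩
    (image_mono (f := f) (Icc_subset_Icc_right hab))

theorem exists_argmax (hf : ContinuousOn f (Icc 0 t)) {x : ℝ} (hx : x ∈ Icc 0 t) :
    ∃ τ ∈ Icc 0 x, runSup f x = f τ ∧ ∀ u ∈ Icc 0 x, f u ≤ f τ := by
  obtain ⟨τ, hτ, hmax⟩ := isCompact_Icc.exists_isMaxOn (nonempty_Icc.2 hx.1)
    (hf.mono (Icc_subset_Icc_right hx.2))
  have hmax' : ∀ u ∈ Icc 0 x, f u ≤ f τ := fun u hu => hmax hu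
  refine ⟨τ, hτ, ?_, hmax'⟩
  exact IsGreatest.csSup_eq ⟨mem_image_of_mem f hτ, by rintro _ ⟨u, hu, rfl⟩; exact hmax' u hu⟩

end Basics

theorem vsum_congr_abs {p : ℝ} {X Y : ℝ → ℝ} (hXY : ∀ x y, |Y y - Y x| = |X y - X x|) :
    ∀ l : List ℝ, vsum p Y l = vsum p X l
  | [] => rfl
  | [_] => rfl
  | a :: b :: l => by
    rw [vsum_cons₂, vsum_cons₂, hXY a b, vsum_congr_abs hXY (b :: l)]

theorem rdiff_swap (f g : ℝ → ℝ) (x : ℝ) : rdiff g f x = -rdiff f g x := by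
  simp [rdiff]

theorem AltP_swap (f g : ℝ → ℝ) : ∀ l : List ℝ, AltP (rdiff f g) l → AltP (rdiff g f) l
  | [], h => trivial
  | [_], h => trivial
  | [_, _], h => trivial
  | a :: b :: c :: l, h => by
    refine ⟨?_, AltP_swap f g (b :: c :: l) h.2⟩
    have := h.1
    simp only [rdiff_swap f g]
    nlinarith

/-- The key chain construction for strictly alternating partitions. -/
theorem aux_chain {t p : ℝ} (hp : 1 ≤ p) :
    ∀ (l : List ℝ) (f g : ℝ → ℝ), ContinuousOn f (Icc 0 t) → ContinuousOn g (Icc 0 t) →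
    ∀ (a y : ℝ), (a :: l).Chain' (· ≤ ·) → (∀ x ∈ a :: l, x ∈ Icc 0 t) →
      AltP (rdiff f g) (a :: l) → y ∈ Icc 0 t → y ≤ a →
      (∀ b ∈ l.head?, rdiff f g a ≤ rdiff f g b ∧
        (rdiff f g a < rdiff f g b → f y - g y ≤ rdiff f g a)) →
      ∃ ys : List ℝ, (y :: ys).Chain' (· ≤ ·) ∧ (∀ z ∈ ys, z ∈ Icc 0 t) ∧
        vsum p (rdiff f g) (a :: l) ≤ vsum p (fun x => f x - g x) (y :: ys)
  | [], f, g, hf, hg, a, y, _, _, _, _, _, _ => ⟨[], List.isChain_singleton y, by simp, by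
      show vsum p (rdiff f g) [a] ≤ vsum p (fun x => f x - g x) [y]
      simp [vsum]⟩
  | b :: l₂, f, g, hf, hg, a, y, hc, hm, hA, hy, hya, hmatch => by
    set D := rdiff f g with hD
    obtain ⟨hab0, hstrict⟩ := hmatch b rfl
    have ha : a ∈ Icc 0 t := hm a (by simp)
    have hb : b ∈ Icc 0 t := hm b (by simp)
    have hab : a ≤ b := (List.isChain_cons_cons.1 hc).1
    rcases eq_or_lt_of_le hab0 with heq | hlt
    · -- zero first increment: the list must end here
      have hl₂ : l₂ = [] := by
        cases l₂ with
        | nil => rfl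
        | cons c l₃ =>
          exfalso
          have := hA.1
          rw [← heq] at this
          simp at this
      subst hl₂
      refine ⟨[], List.isChain_singleton y, by simp, ?_⟩
      show |D b - D a| ^ p + vsum p D [b] ≤ vsum p (fun x => f x - g x) [y]
      have : D b - D a = 0 := by rw [← heq]; ring
      rw [this]
      simp [vsum, abs_zero, Real.zero_rpow (by linarith : p ≠ 0)]
    · -- positive first increment: pick an argmax of f on [0,b]
      have hyD : f y - g y ≤ D a := hstrict hlt
      obtain ⟨τ, hτb, hτeq, hτmax⟩ := exists_argmax hf hb
      have hτt : τ ∈ Icc 0 t := ⟨hτb.1, le_trans hτb.2 hb.2⟩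
      -- f's running sup strictly increases
      have hgmono : runSup g a ≤ runSup g b := runSup_mono hg ha.1 hab hb.2
      have hfinc : runSup f a < runSup f b := by
        have : D a < D b := hlt
        simp only [hD, rdiff] at this
        linarith
      have haτ : a < τ := by
        by_contra hcon
        push_neg at hcon
        have : f τ ≤ runSup f a := le_runSup hf ha ⟨hτb.1, hcon⟩
        rw [← hτeq] at this
        linarith
      -- the increment bound
      have hDb : D b ≤ f τ - g τ := by
        have : g τ ≤ runSup g b := le_runSup hg hb hτb
        simp only [hD, rdiff, hτeq]
        linarith
      have hbound : |D b - D a| ^ p ≤ |(f τ - g τ) - (f y - g y)| ^ p := by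
        apply Real.rpow_le_rpow (abs_nonneg _) _ (by linarith)
        rw [abs_of_pos (by linarith), abs_of_pos (by linarith)]
        linarith
      -- recursive call with f and g swapped
      have hc₂ : (b :: l₂).Chain' (· ≤ ·) := (List.isChain_cons_cons.1 hc).2
      have hm₂ : ∀ x ∈ b :: l₂, x ∈ Icc 0 t := fun x hx => hm x (List.mem_cons_of_mem a hx)
      have hA₂ : AltP (rdiff g f) (b :: l₂) := AltP_swap f g _ (by
        cases l₂ with
        | nil => trivial
        | cons c l₃ => exact hA.2)
      have hmatch₂ : ∀ c ∈ l₂.head?, rdiff g f b ≤ rdiff g f c ∧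
          (rdiff g f b < rdiff g f c → g τ - f τ ≤ rdiff g f b) := by
        cases l₂ with
        | nil => intro c hc'; simp at hc'
        | cons c' l₃ =>
          intro c hc'
          have hcc : c = c' := by
            simp only [List.head?_cons, Option.mem_def, Option.some.injEq] at hc'
            exact hc'.symm
          subst hcc
          have htriple : (D b - D a) * (D c - D b) < 0 := hA.1
          have hcb : D c < D b := by nlinarith
          have hswb := rdiff_swap f g b
          have hswc := rdiff_swap f g c
          constructor
          · rw [hswb, hswc]; simp only [← hD]; linarith
          · intro _
            rw [hswb]; simp only [← hD]
            linarith
      obtain ⟨ys₂, hcys, hmys, hvs⟩ := aux_chain hp l₂ g f hg hf b τ hc₂ hm₂ hA₂ hτt hτb.2 hmatch₂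
      refine ⟨τ :: ys₂, List.isChain_cons_cons.2 ⟨by linarith, hcys⟩,
        fun z hz => by rcases List.mem_cons.1 hz with rfl | hz; exacts [hτt, hmys z hz], ?_⟩
      have e1 : vsum p D (b :: l₂) = vsum p (rdiff g f) (b :: l₂) :=
        vsum_congr_abs (fun x y => by
          rw [rdiff_swap f g x, rdiff_swap f g y, ← hD]
          have hr : -D y - -D x = D x - D y := by ring
          rw [hr, abs_sub_comm]) _
      have e2 : vsum p (fun x => g x - f x) (τ :: ys₂) = vsum p (fun x => f x - g x) (τ :: ys₂) :=
        vsum_congr_abs (fun x y => by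
          have hr : (g y - f y) - (g x - f x) = -((f y - g y) - (f x - g x)) := by ring
          rw [hr, abs_neg]) _
      show |D b - D a| ^ p + vsum p D (b :: l₂) ≤
        |(f τ - g τ) - (f y - g y)| ^ p + vsum p (fun x => f x - g x) (τ :: ys₂)
      rw [e1]
      rw [e2] at hvs
      linarith [hbound]

/-- The discrete core estimate: the variation sum of the difference of running suprema
along any monotone list of times in `[0,t]` is dominated by the variation sum of the
difference of the paths along some other monotone list of times in `[0,t]`. -/
theorem core_estimate {t p : ℝ} (hp : 1 ≤ p) {f g : ℝ → ℝ}
    (hf : ContinuousOn f (Icc 0 t)) (hg : ContinuousOn g (Icc 0 t))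
    (l : List ℝ) (hc : l.Chain' (· ≤ ·)) (hm : ∀ x ∈ l, x ∈ Icc 0 t) :
    ∃ ys : List ℝ, ys.Chain' (· ≤ ·) ∧ (∀ z ∈ ys, z ∈ Icc 0 t) ∧
      vsum p (rdiff f g) l ≤ vsum p (fun x => f x - g x) ys := by
  obtain ⟨l', hc', hm', hA', hle⟩ := alt_reduce hp (rdiff f g) (Icc 0 t) l.length l le_rfl hc hm
  set D := rdiff f g with hD
  match l', hA' with
  | [], _ => exact ⟨[], List.isChain_nil, by simp, by simpa [vsum] using hle⟩
  | [a], _ => exact ⟨[], List.isChain_nil, by simp, by simpa [vsum] using hle⟩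
  | a :: b :: l₂, hA' => ?_
  have ha : a ∈ Icc 0 t := hm' a (by simp)
  rcases lt_trichotomy (D a) (D b) with hlt | heq | hgt
  · -- positive first step: anchor at an argmax of g on [0,a]
    obtain ⟨σ, hσa, hσeq, _⟩ := exists_argmax hg ha
    have hσt : σ ∈ Icc 0 t := ⟨hσa.1, le_trans hσa.2 ha.2⟩
    have hanchor : f σ - g σ ≤ D a := by
      have : f σ ≤ runSup f a := le_runSup hf ha hσa
      simp only [hD, rdiff, hσeq]
      linarith
    have hmatch : ∀ c ∈ (b :: l₂).head?, D a ≤ D c ∧ (D a < D c → f σ - g σ ≤ D a) := by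
      intro c hc''
      have : c = b := by simpa using hc''.symm
      subst this
      exact ⟨le_of_lt hlt, fun _ => hanchor⟩
    obtain ⟨ys, h1, h2, h3⟩ := aux_chain hp (b :: l₂) f g hf hg a σ hc' hm' hA' hσt hσa.2 hmatch
    exact ⟨σ :: ys, h1, fun z hz => by
      rcases List.mem_cons.1 hz with rfl | hz; exacts [hσt, h2 z hz], le_trans hle h3⟩
  · -- zero first step: anchor at a itself
    have hmatch : ∀ c ∈ (b :: l₂).head?, D a ≤ D c ∧ (D a < D c → f a - g a ≤ D a) := by
      intro c hc''
      have : c = b := by simpa using hc''.symm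
      subst this
      exact ⟨le_of_eq heq, fun h' => absurd h' (by rw [heq]; exact lt_irrefl _)⟩
    obtain ⟨ys, h1, h2, h3⟩ := aux_chain hp (b :: l₂) f g hf hg a a hc' hm' hA' ha le_rfl hmatch
    exact ⟨a :: ys, h1, fun z hz => by
      rcases List.mem_cons.1 hz with rfl | hz; exacts [ha, h2 z hz], le_trans hle h3⟩
  · -- negative first step: swap the roles of f and g, anchor at an argmax of f on [0,a]
    obtain ⟨τ, hτa, hτeq, _⟩ := exists_argmax hf ha
    have hτt : τ ∈ Icc 0 t := ⟨hτa.1, le_trans hτa.2 ha.2⟩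
    have hanchor : g τ - f τ ≤ rdiff g f a := by
      have : g τ ≤ runSup g a := le_runSup hg ha hτa
      simp only [rdiff]
      rw [hτeq]
      linarith
    have hA'' : AltP (rdiff g f) (a :: b :: l₂) := AltP_swap f g _ hA'
    have hmatch : ∀ c ∈ (b :: l₂).head?, rdiff g f a ≤ rdiff g f c ∧
        (rdiff g f a < rdiff g f c → g τ - f τ ≤ rdiff g f a) := by
      intro c hc''
      have : c = b := by simpa using hc''.symm
      subst this
      rw [rdiff_swap f g, rdiff_swap f g]
      exact ⟨by simp only [← hD]; linarith, fun _ => by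
        rw [← rdiff_swap f g]; exact hanchor⟩
    obtain ⟨ys, h1, h2, h3⟩ := aux_chain hp (b :: l₂) g f hg hf a τ hc' hm' hA'' hτt hτa.2 hmatch
    have e1 : vsum p (rdiff g f) (a :: b :: l₂) = vsum p D (a :: b :: l₂) :=
      vsum_congr_abs (fun x y => by
        rw [rdiff_swap f g x, rdiff_swap f g y, ← hD]
        have hr : -D y - -D x = D x - D y := by ring
        rw [hr, abs_sub_comm]) _
    have e2 : vsum p (fun x => g x - f x) (τ :: ys) = vsum p (fun x => f x - g x) (τ :: ys) :=
      vsum_congr_abs (fun x y => by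
        have hr : (g y - f y) - (g x - f x) = -((f y - g y) - (f x - g x)) := by ring
        rw [hr, abs_neg]) _
    rw [e1, e2] at h3
    exact ⟨τ :: ys, h1, fun z hz => by
      rcases List.mem_cons.1 hz with rfl | hz; exacts [hτt, h2 z hz], le_trans hle h3⟩

theorem ofFn_vsum (p : ℝ) (X : ℝ → ℝ) :
    ∀ (n : ℕ) (v : Fin (n + 1) → ℝ),
      vsum p X (List.ofFn v) = ∑ i : Fin n, |X (v i.succ) - X (v i.castSucc)| ^ p
  | 0, v => by simp [vsum]
  | n + 1, v => by
    rw [List.ofFn_succ]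
    have h2 : List.ofFn (fun i : Fin (n + 1) => v i.succ) =
        v 1 :: List.ofFn (fun i : Fin n => v i.succ.succ) := by
      rw [List.ofFn_succ]
      rfl
    rw [h2, vsum_cons₂, ← h2, ofFn_vsum p X n (fun i => v i.succ), Fin.sum_univ_succ]
    simp only [Fin.succ_castSucc, Fin.succ_zero_eq_one, Fin.castSucc_zero]

/-- the `ℝ≥0∞`-valued partition sum equals `ofReal` of the real variation sum of its list -/
theorem partition_sum_eq {p : ℝ} (hp : 1 ≤ p) (X : ℝ → ℝ) {a b : ℝ} (P : PVarPartition a b) :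
    (∑ i : Fin P.n, (ENNReal.ofReal ‖X (P.pts i.succ) - X (P.pts i.castSucc)‖) ^ p)
      = ENNReal.ofReal (vsum p X (List.ofFn P.pts)) := by
  have hp0 : (0:ℝ) ≤ p := by linarith
  rw [ofFn_vsum, ENNReal.ofReal_sum_of_nonneg
    (fun i _ => Real.rpow_nonneg (abs_nonneg _) p)]
  apply Finset.sum_congr rfl
  intro i _
  rw [Real.norm_eq_abs, ENNReal.ofReal_rpow_of_nonneg (abs_nonneg _) hp0]

theorem partition_list_chain' {a b : ℝ} (P : PVarPartition a b) :
    (List.ofFn P.pts).Chain' (· ≤ ·) := by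
  simp only [List.Chain']
  rw [List.isChain_iff_pairwise, List.pairwise_iff_get]
  intro i j hij
  rw [List.get_ofFn, List.get_ofFn]
  exact P.mono (by exact_mod_cast le_of_lt hij)

theorem partition_list_mem {t : ℝ} (P : PVarPartition 0 t) :
    ∀ x ∈ List.ofFn P.pts, x ∈ Icc 0 t := by
  intro x hx
  rw [List.mem_ofFn] at hx
  obtain ⟨i, rfl⟩ := hx
  constructor
  · have h := P.mono (Fin.zero_le i); rwa [P.first] at h
  · have h := P.mono (Fin.le_last i); rwa [P.last] at h

/-- turn a monotone list with endpoints `0` and `t` into a partition -/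
theorem list_to_partition {t p : ℝ} (X : ℝ → ℝ) (L : List ℝ) (hcL : L.Chain' (· ≤ ·))
    (n : ℕ) (hLlen : L.length = n + 1) (hfirst : L.get ⟨0, by omega⟩ = 0)
    (hlast : L.get ⟨n, by omega⟩ = t) :
    ∃ Q : PVarPartition 0 t, vsum p X L = vsum p X (List.ofFn Q.pts) := by
  have hpw := List.isChain_iff_pairwise.1 hcL
  have hmono : Monotone (fun i : Fin (n + 1) => L.get (Fin.cast hLlen.symm i)) := by
    intro i j hij
    rcases eq_or_lt_of_le hij with rfl | hlt
    · exact le_rfl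
    · exact List.pairwise_iff_get.1 hpw _ _
        (Fin.lt_def.2 (by simpa [Fin.coe_cast] using Fin.lt_def.1 hlt))
  have hofn : List.ofFn (fun i : Fin (n + 1) => L.get (Fin.cast hLlen.symm i)) = L := by
    apply List.ext_get
    · simp [hLlen]
    · intro i h1 h2
      rw [List.get_ofFn]
      rfl
  refine ⟨⟨n, fun i => L.get (Fin.cast hLlen.symm i), hmono, ?_, ?_⟩, ?_⟩
  · show L.get _ = 0
    convert hfirst using 2
    rfl
  · show L.get _ = t
    convert hlast using 2
    rfl
  · show vsum p X L = vsum p X (List.ofFn _)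
    rw [hofn]

/-- build a partition of `[0,t]` from a monotone list of times inside `[0,t]`, whose
variation sum dominates that of the list -/
theorem exists_partition_dominating {t p : ℝ} (ht : 0 ≤ t) (X : ℝ → ℝ)
    (ys : List ℝ) (hc : ys.Chain' (· ≤ ·)) (hm : ∀ z ∈ ys, z ∈ Icc 0 t) :
    ∃ Q : PVarPartition 0 t,
      vsum p X ys ≤ vsum p X (List.ofFn Q.pts) := by
  have hcL : (0 :: (ys ++ [t])).Chain' (· ≤ ·) := by
    simp only [List.Chain']
    rw [List.isChain_cons]
    constructor
    · intro x hx
      have hx' := List.mem_of_mem_head? hx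
      rcases List.mem_append.1 hx' with hx' | hx'
      · exact (hm x hx').1
      · simp at hx'; subst hx'; exact ht
    · rw [List.isChain_append]
      refine ⟨hc, List.isChain_singleton t, ?_⟩
      intro x hx y hy
      simp at hy; subst hy
      obtain ⟨hne, rfl⟩ := List.mem_getLast?_eq_getLast hx
      exact (hm _ (List.getLast_mem hne)).2
  have hlen : (0 :: (ys ++ [t])).length = (ys.length + 1) + 1 := by simp
  have hfirst : (0 :: (ys ++ [t])).get ⟨0, by omega⟩ = 0 := rfl
  have hlast : ((0:ℝ) :: (ys ++ [t])).get ⟨ys.length + 1, by simp⟩ = t := by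
    show (((0:ℝ) :: ys) ++ [t]).get ⟨(0 :: ys).length, by simp⟩ = t
    simp
  obtain ⟨Q, hQ⟩ := list_to_partition X (0 :: (ys ++ [t])) hcL (ys.length + 1) hlen hfirst hlast
  refine ⟨Q, ?_⟩
  rw [← hQ]
  calc vsum p X ys ≤ vsum p X (ys ++ [t]) := vsum_le_concat p X t ys
    _ ≤ vsum p X (0 :: (ys ++ [t])) := vsum_le_cons p X 0 (ys ++ [t])

/-- **running suprema are 1-Lipschitz in `p`-variation**. -/
theorem pVar_runSup_sub_le {t p : ℝ} (hp : 1 ≤ p) (ht : 0 ≤ t) {f g : ℝ → ℝ}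
    (hf : ContinuousOn f (Icc 0 t)) (hg : ContinuousOn g (Icc 0 t)) :
    pVar p (fun x => runSup f x - runSup g x) 0 t ≤ pVar p (fun x => f x - g x) 0 t := by
  apply iSup_le
  intro P
  obtain ⟨ys, hc, hm, hle⟩ := core_estimate hp hf hg (List.ofFn P.pts)
    (partition_list_chain' P) (partition_list_mem P)
  obtain ⟨Q, hQ⟩ := exists_partition_dominating (p := p) ht (fun x => f x - g x) ys hc hm
  refine le_trans (le_of_eq (congrArg (· ^ (1/p))
    (partition_sum_eq hp (fun x => runSup f x - runSup g x) P))) ?_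
  refine le_trans (ENNReal.rpow_le_rpow
    (ENNReal.ofReal_le_ofReal (le_trans hle hQ)) (by positivity)) ?_
  refine le_trans (le_of_eq (congrArg (· ^ (1/p))
    (partition_sum_eq hp (fun x => f x - g x) Q).symm)) ?_
  exact le_iSup (fun Q : PVarPartition 0 t =>
    (∑ i : Fin Q.n, (ENNReal.ofReal
      ‖(fun x => f x - g x) (Q.pts i.succ) - (fun x => f x - g x) (Q.pts i.castSucc)‖) ^ p) ^ (1/p)) Q

/-- scaling bound for `pVar` -/
theorem pVar_smul_le {p : ℝ} (hp : 1 ≤ p) (c : ℝ) (X : ℝ → ℝ) (a b : ℝ) :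
    pVar p (fun x => c * X x) a b ≤ ENNReal.ofReal |c| * pVar p X a b := by
  have hp0 : (0:ℝ) ≤ p := by linarith
  apply iSup_le
  intro P
  have hterm : ∀ i : Fin P.n,
      (ENNReal.ofReal ‖(fun x => c * X x) (P.pts i.succ) - (fun x => c * X x) (P.pts i.castSucc)‖) ^ p
        = (ENNReal.ofReal |c|) ^ p * (ENNReal.ofReal ‖X (P.pts i.succ) - X (P.pts i.castSucc)‖) ^ p := by
    intro i
    have : (fun x => c * X x) (P.pts i.succ) - (fun x => c * X x) (P.pts i.castSucc)
        = c * (X (P.pts i.succ) - X (P.pts i.castSucc)) := by ring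
    rw [this, Real.norm_eq_abs, abs_mul, ENNReal.ofReal_mul (abs_nonneg c),
      ENNReal.mul_rpow_of_nonneg _ _ hp0, Real.norm_eq_abs]
  calc (∑ i : Fin P.n, (ENNReal.ofReal ‖(fun x => c * X x) (P.pts i.succ) -
          (fun x => c * X x) (P.pts i.castSucc)‖) ^ p) ^ (1/p)
      = ((ENNReal.ofReal |c|) ^ p *
          ∑ i : Fin P.n, (ENNReal.ofReal ‖X (P.pts i.succ) - X (P.pts i.castSucc)‖) ^ p) ^ (1/p) := by
        rw [Finset.mul_sum]
        congr 1
        exact Finset.sum_congr rfl (fun i _ => hterm i)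
    _ = ENNReal.ofReal |c| *
          (∑ i : Fin P.n, (ENNReal.ofReal ‖X (P.pts i.succ) - X (P.pts i.castSucc)‖) ^ p) ^ (1/p) := by
        rw [ENNReal.mul_rpow_of_nonneg _ _ (by positivity), ← ENNReal.rpow_mul,
          mul_one_div_cancel (by linarith : p ≠ 0), ENNReal.rpow_one]
    _ ≤ ENNReal.ofReal |c| * pVar p X a b := by
        apply mul_le_mul_right
        exact le_iSup (fun P : PVarPartition a b =>
          (∑ i : Fin P.n, (ENNReal.ofReal ‖X (P.pts i.succ) - X (P.pts i.castSucc)‖) ^ p) ^ (1/p)) P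

/-- triangle inequality for `pVar` -/
theorem pVar_add_le {p : ℝ} (hp : 1 ≤ p) (X Y : ℝ → ℝ) (a b : ℝ) :
    pVar p (fun x => X x + Y x) a b ≤ pVar p X a b + pVar p Y a b := by
  have hp0 : (0:ℝ) ≤ p := by linarith
  apply iSup_le
  intro P
  have hterm : ∀ i : Fin P.n,
      (ENNReal.ofReal ‖(fun x => X x + Y x) (P.pts i.succ) - (fun x => X x + Y x) (P.pts i.castSucc)‖)
        ≤ ENNReal.ofReal ‖X (P.pts i.succ) - X (P.pts i.castSucc)‖ +
          ENNReal.ofReal ‖Y (P.pts i.succ) - Y (P.pts i.castSucc)‖ := by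
    intro i
    rw [← ENNReal.ofReal_add (norm_nonneg _) (norm_nonneg _)]
    apply ENNReal.ofReal_le_ofReal
    have : (fun x => X x + Y x) (P.pts i.succ) - (fun x => X x + Y x) (P.pts i.castSucc)
        = (X (P.pts i.succ) - X (P.pts i.castSucc)) + (Y (P.pts i.succ) - Y (P.pts i.castSucc)) := by
      ring
    rw [this]
    exact norm_add_le _ _
  calc (∑ i : Fin P.n, (ENNReal.ofReal ‖(fun x => X x + Y x) (P.pts i.succ) -
          (fun x => X x + Y x) (P.pts i.castSucc)‖) ^ p) ^ (1/p)
      ≤ (∑ i : Fin P.n, (ENNReal.ofReal ‖X (P.pts i.succ) - X (P.pts i.castSucc)‖ +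
          ENNReal.ofReal ‖Y (P.pts i.succ) - Y (P.pts i.castSucc)‖) ^ p) ^ (1/p) := by
        apply ENNReal.rpow_le_rpow _ (by positivity)
        exact Finset.sum_le_sum (fun i _ => ENNReal.rpow_le_rpow (hterm i) hp0)
    _ ≤ (∑ i : Fin P.n, (ENNReal.ofReal ‖X (P.pts i.succ) - X (P.pts i.castSucc)‖) ^ p) ^ (1/p) +
        (∑ i : Fin P.n, (ENNReal.ofReal ‖Y (P.pts i.succ) - Y (P.pts i.castSucc)‖) ^ p) ^ (1/p) :=
        ENNReal.Lp_add_le _ _ _ hp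
    _ ≤ pVar p X a b + pVar p Y a b := by
        apply add_le_add
        · exact le_iSup (fun P : PVarPartition a b =>
            (∑ i : Fin P.n, (ENNReal.ofReal ‖X (P.pts i.succ) - X (P.pts i.castSucc)‖) ^ p) ^ (1/p)) P
        · exact le_iSup (fun P : PVarPartition a b =>
            (∑ i : Fin P.n, (ENNReal.ofReal ‖Y (P.pts i.succ) - Y (P.pts i.castSucc)‖) ^ p) ^ (1/p)) P

/-- the running supremum of a continuous function is continuous -/
theorem continuousOn_runSup {t : ℝ} {f : ℝ → ℝ} (hf : ContinuousOn f (Icc 0 t)) :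
    ContinuousOn (runSup f) (Icc 0 t) := by
  rcases le_or_gt 0 t with ht | ht
  swap
  · rw [Icc_eq_empty (by linarith)]; exact continuousOn_empty _
  have hu : UniformContinuousOn f (Icc 0 t) :=
    isCompact_Icc.uniformContinuousOn_of_continuous hf
  rw [Metric.uniformContinuousOn_iff] at hu
  intro x hx
  rw [Metric.continuousWithinAt_iff]
  intro ε hε
  obtain ⟨δ, hδ, hδ'⟩ := hu (ε/2) (by linarith)
  -- key estimate
  have key : ∀ a b : ℝ, a ∈ Icc 0 t → b ∈ Icc 0 t → a ≤ b → b - a < δ →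
      runSup f b ≤ runSup f a + ε/2 := by
    intro a b ha hb hab hd
    apply csSup_le (⟨f 0, mem_image_of_mem f (left_mem_Icc.2 hb.1)⟩)
    rintro v ⟨u, hu', rfl⟩
    rcases le_or_gt u a with hua | hua
    · have : f u ≤ runSup f a := le_runSup hf ha ⟨hu'.1, hua⟩
      linarith
    · have hut : u ∈ Icc 0 t := ⟨hu'.1, le_trans hu'.2 hb.2⟩
      have hat : a ∈ Icc 0 t := ha
      have hdist : dist u a < δ := by
        rw [Real.dist_eq, abs_of_pos (by linarith)]
        linarith [hu'.2]
      have := hδ' u hut a hat hdist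
      rw [Real.dist_eq] at this
      have h2 : f u - f a < ε/2 := lt_of_le_of_lt (le_abs_self _) this
      have h3 : f a ≤ runSup f a := le_runSup hf ha (right_mem_Icc.2 ha.1)
      linarith
  refine ⟨δ, hδ, ?_⟩
  intro y hy hyx
  rw [Real.dist_eq]
  rcases le_or_gt y x with hyx' | hyx'
  · have h1 : runSup f y ≤ runSup f x := runSup_mono hf hy.1 hyx' hx.2
    have h2 : runSup f x ≤ runSup f y + ε/2 := by
      apply key y x hy hx hyx'
      rw [Real.dist_eq, abs_of_nonpos (by linarith)] at hyx
      linarith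
    rw [abs_of_nonpos (by linarith)]
    linarith
  · have h1 : runSup f x ≤ runSup f y := runSup_mono hf hx.1 (le_of_lt hyx') hy.2
    have h2 : runSup f y ≤ runSup f x + ε/2 := by
      apply key x y hx hy (le_of_lt hyx')
      rw [Real.dist_eq, abs_of_pos (by linarith)] at hyx
      linarith
    rw [abs_of_nonneg (by linarith)]
    linarith


/-- the inner auxiliary path of `phiPlus`. -/
noncomputable def innerG (α : ℝ) (w m : ℝ → ℝ) : ℝ → ℝ := fun v => -w v - α * m v

/-- the outer auxiliary path of `phiPlus`. -/
noncomputable def innerF (α β : ℝ) (w m : ℝ → ℝ) : ℝ → ℝ :=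
  fun s => w s - (β / (1 - β)) * runSup (innerG α w m) s

theorem phiPlus_eq_runSup (α β : ℝ) (w m : ℝ → ℝ) :
    phiPlus α β w m = fun u => (1 / (1 - α)) * runSup (innerF α β w m) u := rfl

theorem innerG_cont {T α : ℝ} {w m : ℝ → ℝ} (hw : ContinuousOn w (Set.Icc 0 T))
    (hm : ContinuousOn m (Set.Icc 0 T)) : ContinuousOn (innerG α w m) (Set.Icc 0 T) :=
  hw.neg.sub (continuousOn_const.mul hm)

theorem innerF_cont {T α β : ℝ} {w m : ℝ → ℝ} (hw : ContinuousOn w (Set.Icc 0 T))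
    (hm : ContinuousOn m (Set.Icc 0 T)) : ContinuousOn (innerF α β w m) (Set.Icc 0 T) :=
  hw.sub (continuousOn_const.mul (continuousOn_runSup (innerG_cont hw hm)))


/-- Contraction and Lipschitz estimates in `p`-variation for the perturbed-path
fixed point map `φ⁺`. -/
theorem phiPlus_contraction_and_lipschitz (α β : ℝ) (hα : α < 1) (hβ : β < 1) :
    ∃ C : ℝ, 0 < C ∧
      ∀ (T p : ℝ), 0 < T → 1 ≤ p →
      ∀ w w' m m' : ℝ → ℝ,
      ContinuousOn w (Set.Icc 0 T) → ContinuousOn w' (Set.Icc 0 T) →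
      ContinuousOn m (Set.Icc 0 T) → ContinuousOn m' (Set.Icc 0 T) →
      w 0 = 0 → w' 0 = 0 →
      ∀ t : ℝ, 0 ≤ t → t ≤ T →
        (pVar p (fun u => phiPlus α β w m u - phiPlus α β w m' u) 0 t ≤
          ENNReal.ofReal (|α * β| / ((1 - α) * (1 - β))) *
            pVar p (fun u => m u - m' u) 0 t) ∧
        (pVar p (fun u => phiPlus α β w m u - phiPlus α β w' m u) 0 t ≤
          ENNReal.ofReal C * pVar p (fun u => w u - w' u) 0 t) := by
  have hα' : (0:ℝ) < 1 - α := by linarith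
  have hβ' : (0:ℝ) < 1 - β := by linarith
  refine ⟨(1 / (1 - α)) * (1 + |β| / (1 - β)), ?_, ?_⟩
  · apply mul_pos (by positivity)
    have : (0:ℝ) ≤ |β| / (1 - β) := div_nonneg (abs_nonneg β) hβ'.le
    linarith
  intro T p hT hp w w' m m' hw hw' hm hm' _hw0 _hw'0 t ht htT
  have hsub : Set.Icc (0:ℝ) t ⊆ Set.Icc 0 T := Set.Icc_subset_Icc_right htT
  -- continuity of the auxiliary paths on [0,t]
  have hF1 : ContinuousOn (innerF α β w m) (Set.Icc 0 t) := (innerF_cont hw hm).mono hsub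
  have hF2 : ContinuousOn (innerF α β w m') (Set.Icc 0 t) := (innerF_cont hw hm').mono hsub
  have hF3 : ContinuousOn (innerF α β w' m) (Set.Icc 0 t) := (innerF_cont hw' hm).mono hsub
  have hG1 : ContinuousOn (innerG α w m) (Set.Icc 0 t) := (innerG_cont hw hm).mono hsub
  have hG2 : ContinuousOn (innerG α w m') (Set.Icc 0 t) := (innerG_cont hw hm').mono hsub
  have hG3 : ContinuousOn (innerG α w' m) (Set.Icc 0 t) := (innerG_cont hw' hm).mono hsub
  constructor
  · -- part (i): contraction in m
    have e1 : (fun u => phiPlus α β w m u - phiPlus α β w m' u)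
        = fun u => (1 / (1 - α)) *
          (runSup (innerF α β w m) u - runSup (innerF α β w m') u) := by
      funext u
      simp only [phiPlus_eq_runSup]
      ring
    have e2 : (fun x => innerF α β w m x - innerF α β w m' x)
        = fun x => (-(β / (1 - β))) * (runSup (innerG α w m) x - runSup (innerG α w m') x) := by
      funext x
      simp only [innerF]
      ring
    have e3 : (fun x => innerG α w m x - innerG α w m' x)
        = fun x => (-α) * (m x - m' x) := by
      funext x
      simp only [innerG]
      ring
    have hcoef : ENNReal.ofReal |1 / (1 - α)| *
        (ENNReal.ofReal |(-(β / (1 - β)))| * ENNReal.ofReal |(-α)|)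
        = ENNReal.ofReal (|α * β| / ((1 - α) * (1 - β))) := by
      rw [← ENNReal.ofReal_mul (abs_nonneg _), ← ENNReal.ofReal_mul (abs_nonneg _)]
      congr 1
      rw [abs_neg, abs_neg, abs_div, abs_div, abs_one, abs_of_pos hα', abs_of_pos hβ', abs_mul]
      field_simp
    rw [e1]
    refine le_trans (pVar_smul_le hp (1 / (1 - α))
      (fun u => runSup (innerF α β w m) u - runSup (innerF α β w m') u) 0 t) ?_
    refine le_trans (mul_le_mul_right (pVar_runSup_sub_le hp ht hF1 hF2) _) ?_
    rw [e2]
    refine le_trans (mul_le_mul_right (pVar_smul_le hp (-(β / (1 - β)))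
      (fun x => runSup (innerG α w m) x - runSup (innerG α w m') x) 0 t) _) ?_
    refine le_trans (mul_le_mul_right (mul_le_mul_right
      (pVar_runSup_sub_le hp ht hG1 hG2) _) _) ?_
    rw [e3]
    refine le_trans (mul_le_mul_right (mul_le_mul_right
      (pVar_smul_le hp (-α) (fun x => m x - m' x) 0 t) _) _) ?_
    apply le_of_eq
    rw [show ENNReal.ofReal |1 / (1 - α)| * (ENNReal.ofReal |(-(β / (1 - β)))| *
        (ENNReal.ofReal |(-α)| * pVar p (fun x => m x - m' x) 0 t))
      = (ENNReal.ofReal |1 / (1 - α)| * (ENNReal.ofReal |(-(β / (1 - β)))| *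
        ENNReal.ofReal |(-α)|)) * pVar p (fun x => m x - m' x) 0 t from by ring, hcoef]
  · -- part (ii): Lipschitz in w
    have e1 : (fun u => phiPlus α β w m u - phiPlus α β w' m u)
        = fun u => (1 / (1 - α)) *
          (runSup (innerF α β w m) u - runSup (innerF α β w' m) u) := by
      funext u
      simp only [phiPlus_eq_runSup]
      ring
    have e4 : (fun x => innerF α β w m x - innerF α β w' m x)
        = fun x => (w x - w' x) +
            (-(β / (1 - β))) * (runSup (innerG α w m) x - runSup (innerG α w' m) x) := by
      funext x
      simp only [innerF]
      ring
    have e5 : (fun x => innerG α w m x - innerG α w' m x)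
        = fun x => (-1 : ℝ) * (w x - w' x) := by
      funext x
      simp only [innerG]
      ring
    rw [e1]
    refine le_trans (pVar_smul_le hp (1 / (1 - α))
      (fun u => runSup (innerF α β w m) u - runSup (innerF α β w' m) u) 0 t) ?_
    refine le_trans (mul_le_mul_right (pVar_runSup_sub_le hp ht hF1 hF3) _) ?_
    rw [e4]
    refine le_trans (mul_le_mul_right (pVar_add_le hp (fun x => w x - w' x)
      (fun x => (-(β / (1 - β))) * (runSup (innerG α w m) x - runSup (innerG α w' m) x)) 0 t) _) ?_
    have hsecond : pVar p (fun x => (-(β / (1 - β))) *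
          (runSup (innerG α w m) x - runSup (innerG α w' m) x)) 0 t
        ≤ ENNReal.ofReal |(-(β / (1 - β)))| * pVar p (fun x => w x - w' x) 0 t := by
      refine le_trans (pVar_smul_le hp (-(β / (1 - β)))
        (fun x => runSup (innerG α w m) x - runSup (innerG α w' m) x) 0 t) ?_
      refine le_trans (mul_le_mul_right (pVar_runSup_sub_le hp ht hG1 hG3) _) ?_
      rw [e5]
      refine le_trans (mul_le_mul_right
        (pVar_smul_le hp (-1 : ℝ) (fun x => w x - w' x) 0 t) _) ?_
      apply le_of_eq
      simp
    refine le_trans (mul_le_mul_right (add_le_add_right hsecond _) _) ?_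
    apply le_of_eq
    rw [show ENNReal.ofReal |1 / (1 - α)| * (pVar p (fun x => w x - w' x) 0 t +
        ENNReal.ofReal |(-(β / (1 - β)))| * pVar p (fun x => w x - w' x) 0 t)
      = (ENNReal.ofReal |1 / (1 - α)| * (1 + ENNReal.ofReal |(-(β / (1 - β)))|)) *
        pVar p (fun x => w x - w' x) 0 t from by ring]
    congr 1
    rw [← ENNReal.ofReal_one, ← ENNReal.ofReal_add (by norm_num) (abs_nonneg _),
      ← ENNReal.ofReal_mul (abs_nonneg _)]
    congr 1
    have h1 : |1 / (1 - α)| = 1 / (1 - α) := abs_of_pos (by positivity)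
    have h2 : |(-(β / (1 - β)))| = |β| / (1 - β) := by
      rw [abs_neg, abs_div, abs_of_pos hβ']
    rw [h1, h2]
end

section
/- Existence and uniqueness of perturbed paths: Let T > 0 and α, β ∈ ℝ satisfy α < 1, β < 1 and |αβ| / ((1−α)(1−β)) < 1. Then for every continuous function w : [0,T] → ℝ there exists a unique continuous function f : [0,T] → ℝ such that for all t ∈ [0,T], f(t) = w(t) + α · max_{0 ≤ s ≤ t} f(s) + β · min_{0 ≤ s ≤ t} f(s). -/
open Set

namespace PPaux

noncomputable def clamp (T x : ℝ) : ℝ := max 0 (min x T)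

lemma clamp_mem {T : ℝ} (hT : 0 ≤ T) (x : ℝ) : clamp T x ∈ Icc 0 T :=
  ⟨le_max_left _ _, max_le hT (min_le_right _ _)⟩

lemma clamp_eq {T x : ℝ} (hx : x ∈ Icc 0 T) : clamp T x = x := by
  unfold clamp; rw [min_eq_left hx.2, max_eq_right hx.1]

lemma clamp_idem {T : ℝ} (hT : 0 ≤ T) (x : ℝ) : clamp T (clamp T x) = clamp T x :=
  clamp_eq (clamp_mem hT x)

lemma clamp_mono {T : ℝ} : Monotone (clamp T) := fun _ _ hab =>
  max_le_max le_rfl (min_le_min_right _ hab)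

lemma clamp_lip {T : ℝ} (x y : ℝ) : |clamp T x - clamp T y| ≤ |x - y| := by
  have h1 : |clamp T x - clamp T y| ≤ |min x T - min y T| := by
    have := abs_max_sub_max_le_max (0:ℝ) (min x T) 0 (min y T)
    simpa [clamp, max_comm] using this
  refine h1.trans ?_
  have := abs_min_sub_min_le_max x T y T
  simpa using this

/-- running sup over `[0, clamp T x]`. -/
noncomputable def rsup (T : ℝ) (f : ℝ → ℝ) (x : ℝ) : ℝ := sSup (f '' Icc 0 (clamp T x))

/-- running inf over `[0, clamp T x]`. -/
noncomputable def rinf (T : ℝ) (f : ℝ → ℝ) (x : ℝ) : ℝ := sInf (f '' Icc 0 (clamp T x))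

lemma image_compact {T t : ℝ} {f : ℝ → ℝ} (hf : ContinuousOn f (Icc 0 T))
    (ht : t ∈ Icc 0 T) : IsCompact (f '' Icc 0 t) :=
  isCompact_Icc.image_of_continuousOn (hf.mono (Icc_subset_Icc le_rfl ht.2))

lemma image_nonempty {t : ℝ} {f : ℝ → ℝ} (ht : 0 ≤ t) : (f '' Icc 0 t).Nonempty :=
  (nonempty_Icc.2 ht).image f

lemma sSup_image_mem {T t : ℝ} {f : ℝ → ℝ} (hf : ContinuousOn f (Icc 0 T))
    (ht : t ∈ Icc 0 T) : sSup (f '' Icc 0 t) ∈ f '' Icc 0 t :=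
  (image_compact hf ht).sSup_mem (image_nonempty ht.1)

lemma sInf_image_mem {T t : ℝ} {f : ℝ → ℝ} (hf : ContinuousOn f (Icc 0 T))
    (ht : t ∈ Icc 0 T) : sInf (f '' Icc 0 t) ∈ f '' Icc 0 t :=
  (image_compact hf ht).sInf_mem (image_nonempty ht.1)

lemma le_sSup_image {T t s : ℝ} {f : ℝ → ℝ} (hf : ContinuousOn f (Icc 0 T))
    (ht : t ∈ Icc 0 T) (hs : s ∈ Icc 0 t) : f s ≤ sSup (f '' Icc 0 t) :=
  le_csSup (image_compact hf ht).bddAbove (mem_image_of_mem f hs)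

lemma sInf_image_le {T t s : ℝ} {f : ℝ → ℝ} (hf : ContinuousOn f (Icc 0 T))
    (ht : t ∈ Icc 0 T) (hs : s ∈ Icc 0 t) : sInf (f '' Icc 0 t) ≤ f s :=
  csInf_le (image_compact hf ht).bddBelow (mem_image_of_mem f hs)

lemma sSup_image_le {t a : ℝ} {f : ℝ → ℝ} (ht : 0 ≤ t)
    (h : ∀ s ∈ Icc 0 t, f s ≤ a) : sSup (f '' Icc 0 t) ≤ a :=
  csSup_le (image_nonempty ht) (by rintro _ ⟨s, hs, rfl⟩; exact h s hs)

lemma le_sInf_image {t a : ℝ} {f : ℝ → ℝ} (ht : 0 ≤ t)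
    (h : ∀ s ∈ Icc 0 t, a ≤ f s) : a ≤ sInf (f '' Icc 0 t) :=
  le_csInf (image_nonempty ht) (by rintro _ ⟨s, hs, rfl⟩; exact h s hs)

lemma sSup_image_mono {T a b : ℝ} {f : ℝ → ℝ} (hf : ContinuousOn f (Icc 0 T))
    (ha : 0 ≤ a) (hab : a ≤ b) (hb : b ∈ Icc 0 T) :
    sSup (f '' Icc 0 a) ≤ sSup (f '' Icc 0 b) :=
  csSup_le_csSup (image_compact hf hb).bddAbove (image_nonempty ha)
    (image_mono (Icc_subset_Icc le_rfl hab))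

lemma sInf_image_anti {T a b : ℝ} {f : ℝ → ℝ} (hf : ContinuousOn f (Icc 0 T))
    (ha : 0 ≤ a) (hab : a ≤ b) (hb : b ∈ Icc 0 T) :
    sInf (f '' Icc 0 b) ≤ sInf (f '' Icc 0 a) :=
  csInf_le_csInf (image_compact hf hb).bddBelow (image_nonempty ha)
    (image_mono (Icc_subset_Icc le_rfl hab))

lemma image_neg_fun (f : ℝ → ℝ) (A : Set ℝ) : (fun s => -(f s)) '' A = - (f '' A) := by
  ext y
  simp only [Set.mem_neg, Set.mem_image]
  constructor
  · rintro ⟨s, hs, rfl⟩; exact ⟨s, hs, by ring⟩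
  · rintro ⟨s, hs, h⟩; exact ⟨s, hs, by rw [h]; ring⟩

lemma sInf_image_eq_neg (f : ℝ → ℝ) (A : Set ℝ) :
    sInf (f '' A) = - sSup ((fun s => -(f s)) '' A) := by
  rw [image_neg_fun, Real.sInf_def]

lemma rinf_eq_neg_rsup (T : ℝ) (f : ℝ → ℝ) (x : ℝ) :
    rinf T f x = - rsup T (fun s => -(f s)) x := by
  unfold rinf rsup; rw [sInf_image_eq_neg]

lemma sSup_image_le_add {T u v ε δ : ℝ} {f : ℝ → ℝ} (hf : ContinuousOn f (Icc 0 T))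
    (hu : u ∈ Icc 0 T) (hv : v ∈ Icc 0 T) (huv : u ≤ v) (hδ : v - u < δ) (hε : 0 ≤ ε)
    (hmod : ∀ a ∈ Icc 0 T, ∀ b ∈ Icc 0 T, dist a b < δ → dist (f a) (f b) ≤ ε) :
    sSup (f '' Icc 0 v) ≤ sSup (f '' Icc 0 u) + ε := by
  apply sSup_image_le hv.1
  intro s hs
  rcases le_total s u with h | h
  · exact (le_sSup_image hf hu ⟨hs.1, h⟩).trans (le_add_of_nonneg_right hε)
  · have hsI : s ∈ Icc 0 T := ⟨hs.1, hs.2.trans hv.2⟩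
    have hd : dist s u < δ := by
      rw [Real.dist_eq, abs_of_nonneg (by linarith)]
      linarith [hs.2]
    have h1 : dist (f s) (f u) ≤ ε := hmod s hsI u hu hd
    have h2 : f u ≤ sSup (f '' Icc 0 u) := le_sSup_image hf hu ⟨hu.1, le_rfl⟩
    have h3 : f s - f u ≤ ε := by
      rw [Real.dist_eq] at h1; exact (le_abs_self _).trans h1
    linarith

lemma continuous_rsup {T : ℝ} (hT : 0 ≤ T) {f : ℝ → ℝ} (hf : ContinuousOn f (Icc 0 T)) :
    Continuous (rsup T f) := by
  rw [Metric.continuous_iff]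
  intro x ε hε
  have huc : UniformContinuousOn f (Icc 0 T) :=
    isCompact_Icc.uniformContinuousOn_of_continuous hf
  rw [Metric.uniformContinuousOn_iff] at huc
  obtain ⟨δ, hδ, hmod⟩ := huc (ε / 2) (by linarith)
  refine ⟨δ, hδ, fun y hy => ?_⟩
  have hmod' : ∀ a ∈ Icc 0 T, ∀ b ∈ Icc 0 T, dist a b < δ → dist (f a) (f b) ≤ ε / 2 :=
    fun a ha b hb hab => (hmod a ha b hb hab).le
  have hcl : dist (clamp T y) (clamp T x) < δ := by
    rw [Real.dist_eq]
    exact lt_of_le_of_lt (clamp_lip y x) (by rwa [Real.dist_eq] at hy)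
  have key : ∀ u v : ℝ, u ∈ Icc 0 T → v ∈ Icc 0 T → u ≤ v → dist u v < δ →
      |sSup (f '' Icc 0 v) - sSup (f '' Icc 0 u)| ≤ ε / 2 := by
    intro u v hu hv huv hd
    have h1 : sSup (f '' Icc 0 v) ≤ sSup (f '' Icc 0 u) + ε / 2 := by
      apply sSup_image_le_add hf hu hv huv ?_ (by linarith) hmod'
      rw [Real.dist_eq, abs_of_nonpos (by linarith)] at hd; linarith
    have h2 : sSup (f '' Icc 0 u) ≤ sSup (f '' Icc 0 v) :=
      sSup_image_mono hf hu.1 huv hv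
    rw [abs_of_nonneg (by linarith)]; linarith
  have hxm := clamp_mem hT x
  have hym := clamp_mem hT y
  unfold rsup
  rcases le_total (clamp T y) (clamp T x) with h | h
  · have := key _ _ hym hxm h (by simpa [dist_comm] using hcl)
    rw [Real.dist_eq]
    calc |sSup (f '' Icc 0 (clamp T y)) - sSup (f '' Icc 0 (clamp T x))|
        = |sSup (f '' Icc 0 (clamp T x)) - sSup (f '' Icc 0 (clamp T y))| := abs_sub_comm _ _
      _ ≤ ε / 2 := this
      _ < ε := by linarith
  · have := key _ _ hxm hym h (by simpa [dist_comm] using hcl)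
    rw [Real.dist_eq]
    exact lt_of_le_of_lt this (by linarith)

lemma continuous_rinf {T : ℝ} (hT : 0 ≤ T) {f : ℝ → ℝ} (hf : ContinuousOn f (Icc 0 T)) :
    Continuous (rinf T f) := by
  have : rinf T f = fun x => - rsup T (fun s => -(f s)) x := by
    funext x; exact rinf_eq_neg_rsup T f x
  rw [this]
  exact (continuous_rsup hT hf.neg).neg


lemma key_sup {T a : ℝ} (hT : 0 ≤ T) (ha : a < 1) {g : ℝ → ℝ}
    (hg : ContinuousOn g (Icc 0 T)) :
    ∀ t ∈ Icc (0:ℝ) T,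
      sSup ((fun s => g s + (a / (1 - a)) * sSup (g '' Icc 0 s)) '' Icc 0 t)
        = sSup (g '' Icc 0 t) / (1 - a) := by
  intro t ht
  have h1a : (0:ℝ) < 1 - a := by linarith
  set F : ℝ → ℝ := fun s => g s + (a / (1 - a)) * sSup (g '' Icc 0 s) with hF
  have hub : ∀ s ∈ Icc (0:ℝ) t, F s ≤ sSup (g '' Icc 0 t) / (1 - a) := by
    intro s hs
    have hsT : s ∈ Icc (0:ℝ) T := ⟨hs.1, hs.2.trans ht.2⟩
    have h1 : g s ≤ sSup (g '' Icc 0 s) := le_sSup_image hg hsT ⟨hs.1, le_rfl⟩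
    have h2 : sSup (g '' Icc 0 s) ≤ sSup (g '' Icc 0 t) :=
      sSup_image_mono hg hs.1 hs.2 ht
    have h3 : F s ≤ sSup (g '' Icc 0 s) / (1 - a) := by
      have : sSup (g '' Icc 0 s) + (a / (1 - a)) * sSup (g '' Icc 0 s)
          = sSup (g '' Icc 0 s) / (1 - a) := by field_simp; ring
      rw [hF]; dsimp only; linarith
    exact h3.trans (by gcongr)
  apply le_antisymm
  · exact sSup_image_le ht.1 hub
  · obtain ⟨s₀, hs₀, hgs₀⟩ := sSup_image_mem hg ht
    have hGs₀ : sSup (g '' Icc 0 s₀) = sSup (g '' Icc 0 t) := by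
      apply le_antisymm (sSup_image_mono hg hs₀.1 hs₀.2 ht)
      rw [← hgs₀]
      exact le_sSup_image hg ⟨hs₀.1, hs₀.2.trans ht.2⟩ ⟨hs₀.1, le_rfl⟩
    have hFs₀ : F s₀ = sSup (g '' Icc 0 t) / (1 - a) := by
      rw [hF]; dsimp only; rw [hGs₀, hgs₀]; field_simp; ring
    have : F s₀ ≤ sSup (F '' Icc 0 t) :=
      le_csSup ⟨sSup (g '' Icc 0 t) / (1 - a), by rintro _ ⟨s, hs, rfl⟩; exact hub s hs⟩
        (mem_image_of_mem F hs₀)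
    linarith [hFs₀ ▸ this]

lemma key_sup_unique {T a : ℝ} (hT : 0 ≤ T) (ha : a < 1) {g f : ℝ → ℝ}
    (hg : ContinuousOn g (Icc 0 T)) (hf : ContinuousOn f (Icc 0 T))
    (heq : ∀ s ∈ Icc (0:ℝ) T, f s = g s + a * sSup (f '' Icc 0 s)) :
    ∀ t ∈ Icc (0:ℝ) T, sSup (f '' Icc 0 t) = sSup (g '' Icc 0 t) / (1 - a) := by
  have h1a : (0:ℝ) < 1 - a := by linarith
  have part1 : ∀ t ∈ Icc (0:ℝ) T,
      sSup (g '' Icc 0 t) ≤ (1 - a) * sSup (f '' Icc 0 t) := by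
    intro t ht
    obtain ⟨s₀, hs₀, hgs₀⟩ := sSup_image_mem hg ht
    have hs₀T : s₀ ∈ Icc (0:ℝ) T := ⟨hs₀.1, hs₀.2.trans ht.2⟩
    have h1 : f s₀ ≤ sSup (f '' Icc 0 s₀) := le_sSup_image hf hs₀T ⟨hs₀.1, le_rfl⟩
    have h2 := heq s₀ hs₀T
    have h3 : sSup (g '' Icc 0 t) ≤ (1 - a) * sSup (f '' Icc 0 s₀) := by
      rw [← hgs₀]; nlinarith
    refine h3.trans ?_
    have := sSup_image_mono hf hs₀.1 hs₀.2 ht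
    nlinarith
  intro t ht
  apply le_antisymm
  · rw [le_div_iff₀ h1a, mul_comm]
    rcases le_or_gt 0 a with hap | han
    · have : sSup (f '' Icc 0 t) ≤ sSup (g '' Icc 0 t) + a * sSup (f '' Icc 0 t) := by
        apply sSup_image_le ht.1
        intro s hs
        have hsT : s ∈ Icc (0:ℝ) T := ⟨hs.1, hs.2.trans ht.2⟩
        have h1 : g s ≤ sSup (g '' Icc 0 t) := le_sSup_image hg ht hs
        have h2 : sSup (f '' Icc 0 s) ≤ sSup (f '' Icc 0 t) :=
          sSup_image_mono hf hs.1 hs.2 ht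
        rw [heq s hsT]; nlinarith
      linarith
    · have : sSup (f '' Icc 0 t) ≤ sSup (g '' Icc 0 t) / (1 - a) := by
        apply sSup_image_le ht.1
        intro s hs
        have hsT : s ∈ Icc (0:ℝ) T := ⟨hs.1, hs.2.trans ht.2⟩
        have h1 : g s ≤ sSup (g '' Icc 0 s) := le_sSup_image hg hsT ⟨hs.1, le_rfl⟩
        have h2 : sSup (g '' Icc 0 s) ≤ (1 - a) * sSup (f '' Icc 0 s) := part1 s hsT
        have h3 : sSup (g '' Icc 0 s) ≤ sSup (g '' Icc 0 t) :=
          sSup_image_mono hg hs.1 hs.2 ht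
        have h4 := heq s hsT
        -- f s = g s + a * S s ≤ G s + a * (G s / (1-a)) = G s/(1-a) ≤ G t/(1-a)
        have h5 : a * sSup (f '' Icc 0 s) ≤ a * (sSup (g '' Icc 0 s) / (1 - a)) := by
          apply mul_le_mul_of_nonpos_left _ han.le
          rw [div_le_iff₀ h1a]; linarith
        have h6 : g s + a * (sSup (g '' Icc 0 s) / (1 - a))
            = sSup (g '' Icc 0 s) / (1 - a) + (g s - sSup (g '' Icc 0 s)) := by
          field_simp; ring
        rw [h4]
        calc g s + a * sSup (f '' Icc 0 s)
            ≤ g s + a * (sSup (g '' Icc 0 s) / (1 - a)) := by linarith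
          _ ≤ sSup (g '' Icc 0 s) / (1 - a) := by rw [h6]; linarith
          _ ≤ sSup (g '' Icc 0 t) / (1 - a) := by gcongr
      rwa [le_div_iff₀ h1a, mul_comm] at this
  · rw [div_le_iff₀ h1a, mul_comm]
    exact part1 t ht

lemma key_inf {T b : ℝ} (hT : 0 ≤ T) (hb : b < 1) {h : ℝ → ℝ}
    (hh : ContinuousOn h (Icc 0 T)) :
    ∀ t ∈ Icc (0:ℝ) T,
      sInf ((fun s => h s + (b / (1 - b)) * sInf (h '' Icc 0 s)) '' Icc 0 t)
        = sInf (h '' Icc 0 t) / (1 - b) := by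
  intro t ht
  have hks := key_sup hT hb (g := fun s => -(h s)) hh.neg t ht
  have hfun : (fun s => -((fun s => h s + (b / (1 - b)) * sInf (h '' Icc 0 s)) s))
      = (fun s => (fun s => -(h s)) s + (b / (1 - b)) * sSup ((fun u => -(h u)) '' Icc 0 s)) := by
    funext s
    have := sInf_image_eq_neg h (Icc 0 s)
    dsimp only
    rw [this]; ring
  rw [sInf_image_eq_neg, hfun, hks, sInf_image_eq_neg h]
  ring

lemma key_inf_unique {T b : ℝ} (hT : 0 ≤ T) (hb : b < 1) {h f : ℝ → ℝ}
    (hh : ContinuousOn h (Icc 0 T)) (hf : ContinuousOn f (Icc 0 T))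
    (heq : ∀ s ∈ Icc (0:ℝ) T, f s = h s + b * sInf (f '' Icc 0 s)) :
    ∀ t ∈ Icc (0:ℝ) T, sInf (f '' Icc 0 t) = sInf (h '' Icc 0 t) / (1 - b) := by
  intro t ht
  have heq' : ∀ s ∈ Icc (0:ℝ) T,
      (fun u => -(f u)) s = (fun u => -(h u)) s + b * sSup ((fun u => -(f u)) '' Icc 0 s) := by
    intro s hs
    have h1 := sInf_image_eq_neg f (Icc 0 s)
    have h2 := heq s hs
    dsimp only
    nlinarith [h1.symm ▸ h2]
  have := key_sup_unique (g := fun u => -(h u)) (f := fun u => -(f u)) hT hb hh.neg hf.neg heq' t ht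
  have h3 := sInf_image_eq_neg f (Icc 0 t)
  have h4 := sInf_image_eq_neg h (Icc 0 t)
  rw [h3, h4, this]; ring

lemma abs_rsup_le {T C : ℝ} {f : ℝ → ℝ} (hT : 0 ≤ T) (hf : ContinuousOn f (Icc 0 T))
    (hC : ∀ s ∈ Icc (0:ℝ) T, |f s| ≤ C) : ∀ x, |rsup T f x| ≤ C := by
  intro x
  obtain ⟨s₀, hs₀, hfs₀⟩ := sSup_image_mem hf (clamp_mem hT x)
  rw [rsup, ← hfs₀]
  exact hC s₀ ⟨hs₀.1, hs₀.2.trans (clamp_mem hT x).2⟩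

lemma abs_rinf_le {T C : ℝ} {f : ℝ → ℝ} (hT : 0 ≤ T) (hf : ContinuousOn f (Icc 0 T))
    (hC : ∀ s ∈ Icc (0:ℝ) T, |f s| ≤ C) : ∀ x, |rinf T f x| ≤ C := by
  intro x
  obtain ⟨s₀, hs₀, hfs₀⟩ := sInf_image_mem hf (clamp_mem hT x)
  rw [rinf, ← hfs₀]
  exact hC s₀ ⟨hs₀.1, hs₀.2.trans (clamp_mem hT x).2⟩

lemma rsup_diff_le {T C : ℝ} {f g : ℝ → ℝ} (hT : 0 ≤ T)
    (hf : ContinuousOn f (Icc 0 T)) (hg : ContinuousOn g (Icc 0 T)) (hC : 0 ≤ C)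
    (h : ∀ s ∈ Icc (0:ℝ) T, |f s - g s| ≤ C) : ∀ x, |rsup T f x - rsup T g x| ≤ C := by
  have main : ∀ (f g : ℝ → ℝ), ContinuousOn f (Icc 0 T) → ContinuousOn g (Icc 0 T) →
      (∀ s ∈ Icc (0:ℝ) T, |f s - g s| ≤ C) → ∀ x, rsup T f x - rsup T g x ≤ C := by
    intro f g hf hg h x
    have hcm := clamp_mem hT x
    rw [sub_le_iff_le_add, rsup, rsup]
    apply sSup_image_le hcm.1
    intro s hs
    have hsT : s ∈ Icc (0:ℝ) T := ⟨hs.1, hs.2.trans hcm.2⟩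
    have h1 : f s - g s ≤ C := (le_abs_self _).trans (h s hsT)
    have h2 : g s ≤ sSup (g '' Icc 0 (clamp T x)) := le_sSup_image hg hcm hs
    linarith
  intro x
  rw [abs_sub_le_iff]
  exact ⟨main f g hf hg h x,
    main g f hg hf (fun s hs => by rw [abs_sub_comm]; exact h s hs) x⟩

lemma rinf_diff_le {T C : ℝ} {f g : ℝ → ℝ} (hT : 0 ≤ T)
    (hf : ContinuousOn f (Icc 0 T)) (hg : ContinuousOn g (Icc 0 T)) (hC : 0 ≤ C)
    (h : ∀ s ∈ Icc (0:ℝ) T, |f s - g s| ≤ C) : ∀ x, |rinf T f x - rinf T g x| ≤ C := by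
  intro x
  rw [rinf_eq_neg_rsup, rinf_eq_neg_rsup]
  have := rsup_diff_le (f := fun s => -f s) (g := fun s => -g s) hT hf.neg hg.neg hC
    (fun s hs => by rw [show -f s - -g s = -(f s - g s) by ring, abs_neg]; exact h s hs) x
  rw [show -rsup T (fun s => -f s) x - -rsup T (fun s => -g s) x
      = -(rsup T (fun s => -f s) x - rsup T (fun s => -g s) x) by ring, abs_neg]
  exact this

noncomputable def Mfun (T a b : ℝ) (w' m : ℝ → ℝ) : ℝ → ℝ :=
  fun x => rsup T (fun s => w' s + b * m s) x / (1 - a)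

noncomputable def Pfun (T a b : ℝ) (w' m : ℝ → ℝ) : ℝ → ℝ :=
  fun x => rinf T (fun s => w' s + a * Mfun T a b w' m s) x / (1 - b)

lemma continuous_Mfun {T a b : ℝ} {w' m : ℝ → ℝ} (hT : 0 ≤ T)
    (hw' : ContinuousOn w' (Icc 0 T)) (hm : Continuous m) :
    Continuous (Mfun T a b w' m) :=
  (continuous_rsup hT (hw'.add (continuous_const.mul hm).continuousOn)).div_const _

lemma continuous_Pfun {T a b : ℝ} {w' m : ℝ → ℝ} (hT : 0 ≤ T)
    (hw' : ContinuousOn w' (Icc 0 T)) (hm : Continuous m) :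
    Continuous (Pfun T a b w' m) :=
  (continuous_rinf hT (hw'.add
    (continuous_const.mul (continuous_Mfun hT hw' hm)).continuousOn)).div_const _

lemma abs_Mfun_le {T a b C₁ D : ℝ} {w' m : ℝ → ℝ} (hT : 0 ≤ T) (ha : a < 1)
    (hw' : ContinuousOn w' (Icc 0 T)) (hm : Continuous m)
    (hC₁ : ∀ s ∈ Icc (0:ℝ) T, |w' s| ≤ C₁) (hD : ∀ s, |m s| ≤ D) :
    ∀ x, |Mfun T a b w' m x| ≤ (C₁ + |b| * D) / (1 - a) := by
  intro x
  have h1a : (0:ℝ) < 1 - a := by linarith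
  have hin : ∀ s ∈ Icc (0:ℝ) T, |w' s + b * m s| ≤ C₁ + |b| * D := by
    intro s hs
    calc |w' s + b * m s| ≤ |w' s| + |b * m s| := abs_add_le _ _
      _ ≤ C₁ + |b| * D := by
          rw [abs_mul]
          have := hD s
          have := hC₁ s hs
          have := abs_nonneg b
          nlinarith
  have := abs_rsup_le hT (hw'.add (continuous_const.mul hm).continuousOn) hin x
  rw [Mfun, abs_div, abs_of_pos h1a]
  gcongr; exact this

lemma abs_Pfun_le {T a b C₁ D : ℝ} {w' m : ℝ → ℝ} (hT : 0 ≤ T) (ha : a < 1) (hb : b < 1)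
    (hw' : ContinuousOn w' (Icc 0 T)) (hm : Continuous m)
    (hC₁ : ∀ s ∈ Icc (0:ℝ) T, |w' s| ≤ C₁) (hD : ∀ s, |m s| ≤ D) :
    ∀ x, |Pfun T a b w' m x| ≤ (C₁ + |a| * ((C₁ + |b| * D) / (1 - a))) / (1 - b) := by
  intro x
  have h1b : (0:ℝ) < 1 - b := by linarith
  have hM := abs_Mfun_le (b := b) hT ha hw' hm hC₁ hD
  have hin : ∀ s ∈ Icc (0:ℝ) T,
      |w' s + a * Mfun T a b w' m s| ≤ C₁ + |a| * ((C₁ + |b| * D) / (1 - a)) := by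
    intro s hs
    calc |w' s + a * Mfun T a b w' m s| ≤ |w' s| + |a * Mfun T a b w' m s| := abs_add_le _ _
      _ ≤ C₁ + |a| * ((C₁ + |b| * D) / (1 - a)) := by
          rw [abs_mul]
          have := hM s
          have := hC₁ s hs
          have := abs_nonneg a
          nlinarith
  have := abs_rinf_le hT (hw'.add
    (continuous_const.mul (continuous_Mfun hT hw' hm)).continuousOn) hin x
  rw [Pfun, abs_div, abs_of_pos h1b]
  gcongr; exact this

lemma Pfun_lip {T a b D : ℝ} {w' m₁ m₂ : ℝ → ℝ} (hT : 0 ≤ T) (ha : a < 1) (hb : b < 1)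
    (hw' : ContinuousOn w' (Icc 0 T)) (hm₁ : Continuous m₁) (hm₂ : Continuous m₂)
    (hD0 : 0 ≤ D) (hD : ∀ s, |m₁ s - m₂ s| ≤ D) :
    ∀ x, |Pfun T a b w' m₁ x - Pfun T a b w' m₂ x|
      ≤ |a * b| / ((1 - a) * (1 - b)) * D := by
  have h1a : (0:ℝ) < 1 - a := by linarith
  have h1b : (0:ℝ) < 1 - b := by linarith
  have hc₁ : ContinuousOn (fun s => w' s + b * m₁ s) (Icc 0 T) :=
    hw'.add (continuous_const.mul hm₁).continuousOn
  have hc₂ : ContinuousOn (fun s => w' s + b * m₂ s) (Icc 0 T) :=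
    hw'.add (continuous_const.mul hm₂).continuousOn
  have hMdiff : ∀ x, |Mfun T a b w' m₁ x - Mfun T a b w' m₂ x| ≤ |b| * D / (1 - a) := by
    intro x
    have hr := rsup_diff_le (C := |b| * D) hT hc₁ hc₂ (by positivity)
      (fun s _ => by
        rw [show (w' s + b * m₁ s) - (w' s + b * m₂ s) = b * (m₁ s - m₂ s) by ring, abs_mul]
        have := hD s
        have := abs_nonneg b
        nlinarith) x
    rw [Mfun, Mfun, div_sub_div_same, abs_div, abs_of_pos h1a]
    gcongr
  have hcM₁ : ContinuousOn (fun s => w' s + a * Mfun T a b w' m₁ s) (Icc 0 T) :=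
    hw'.add (continuous_const.mul (continuous_Mfun hT hw' hm₁)).continuousOn
  have hcM₂ : ContinuousOn (fun s => w' s + a * Mfun T a b w' m₂ s) (Icc 0 T) :=
    hw'.add (continuous_const.mul (continuous_Mfun hT hw' hm₂)).continuousOn
  intro x
  have hr := rinf_diff_le (C := |a| * (|b| * D / (1 - a))) hT hcM₁ hcM₂ (by positivity)
    (fun s _ => by
      rw [show (w' s + a * Mfun T a b w' m₁ s) - (w' s + a * Mfun T a b w' m₂ s)
          = a * (Mfun T a b w' m₁ s - Mfun T a b w' m₂ s) by ring, abs_mul]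
      have := hMdiff s
      have := abs_nonneg a
      nlinarith) x
  rw [Pfun, Pfun, div_sub_div_same, abs_div, abs_of_pos h1b]
  rw [show |a * b| / ((1 - a) * (1 - b)) * D = (|a| * (|b| * D / (1 - a))) / (1 - b) by
    rw [abs_mul]; field_simp]
  gcongr
end PPaux

open PPaux in
/-- Existence and uniqueness of perturbed paths: for `α, β < 1` with
`|αβ| / ((1-α)(1-β)) < 1` and any continuous driver `w` on `[0,T]`, there is a unique
continuous `f` on `[0,T]` with
`f(t) = w(t) + α max_{0 ≤ s ≤ t} f(s) + β min_{0 ≤ s ≤ t} f(s)`. -/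
theorem perturbed_path_exists_unique (T α β : ℝ) (hT : 0 < T)
    (hα : α < 1) (hβ : β < 1) (hρ : |α * β| / ((1 - α) * (1 - β)) < 1)
    (w : ℝ → ℝ) (hw : ContinuousOn w (Set.Icc 0 T)) :
    ∃ f : ℝ → ℝ,
      (ContinuousOn f (Set.Icc 0 T) ∧
        ∀ t ∈ Set.Icc (0:ℝ) T,
          f t = w t + α * sSup (f '' Set.Icc 0 t) + β * sInf (f '' Set.Icc 0 t)) ∧
      ∀ g : ℝ → ℝ,
        (ContinuousOn g (Set.Icc 0 T) ∧
          ∀ t ∈ Set.Icc (0:ℝ) T,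
            g t = w t + α * sSup (g '' Set.Icc 0 t) + β * sInf (g '' Set.Icc 0 t)) →
        Set.EqOn g f (Set.Icc 0 T) := by
  classical
  have hT0 : (0:ℝ) ≤ T := hT.le
  have h1a : (0:ℝ) < 1 - α := by linarith
  have h1b : (0:ℝ) < 1 - β := by linarith
  -- clamped driver
  set w' : ℝ → ℝ := fun x => w (clamp T x) with hw'def
  have hclampcont : Continuous (fun x => clamp T x) := by
    unfold clamp; exact continuous_const.max (continuous_id.min continuous_const)
  have hw'cont : Continuous w' :=
    hw.comp_continuous hclampcont (fun x => clamp_mem hT0 x)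
  have hw'eq : ∀ s ∈ Set.Icc (0:ℝ) T, w' s = w s := by
    intro s hs; rw [hw'def]; simp only; rw [clamp_eq hs]
  obtain ⟨C₁, hC₁⟩ : ∃ C₁, ∀ s ∈ Set.Icc (0:ℝ) T, |w' s| ≤ C₁ := by
    obtain ⟨C, hC⟩ := isCompact_Icc.exists_bound_of_continuousOn hw'cont.continuousOn
    exact ⟨C, fun s hs => by simpa [Real.norm_eq_abs] using hC s hs⟩
  -- the contraction on bounded continuous functions
  set ρ : ℝ := |α * β| / ((1 - α) * (1 - β)) with hρdef
  have hρ0 : (0:ℝ) ≤ ρ := by positivity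
  let X := BoundedContinuousFunction ℝ ℝ
  let Ψ : X → X := fun m =>
    BoundedContinuousFunction.ofNormedAddCommGroup (Pfun T α β w' ⇑m)
      (continuous_Pfun hT0 hw'cont.continuousOn m.continuous)
      ((C₁ + |α| * ((C₁ + |β| * ‖m‖) / (1 - α))) / (1 - β))
      (fun x => by
        rw [Real.norm_eq_abs]
        exact abs_Pfun_le hT0 hα hβ hw'cont.continuousOn m.continuous hC₁
          (fun s => by rw [← Real.norm_eq_abs]; exact m.norm_coe_le_norm s) x)
  have hΨcoe : ∀ (m : X) (x : ℝ), Ψ m x = Pfun T α β w' ⇑m x := fun m x => rfl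
  have hlip : LipschitzWith ρ.toNNReal Ψ := by
    apply LipschitzWith.of_dist_le_mul
    intro m₁ m₂
    rw [Real.coe_toNNReal _ hρ0]
    rw [BoundedContinuousFunction.dist_le (by positivity)]
    intro x
    rw [Real.dist_eq, hΨcoe m₁ x, hΨcoe m₂ x]
    have := Pfun_lip (D := dist m₁ m₂) hT0 hα hβ hw'cont.continuousOn
      m₁.continuous m₂.continuous dist_nonneg
      (fun s => by rw [← Real.dist_eq]; exact BoundedContinuousFunction.dist_coe_le_dist s) x
    rwa [hρdef]
  have hcontr : ContractingWith ρ.toNNReal Ψ :=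
    ⟨by rwa [← NNReal.coe_lt_one, Real.coe_toNNReal _ hρ0], hlip⟩
  set mstar : X := ContractingWith.fixedPoint Ψ hcontr with hmstar
  have hfix : Ψ mstar = mstar := hcontr.fixedPoint_isFixedPt
  -- the solution
  set M : ℝ → ℝ := Mfun T α β w' ⇑mstar with hMdef
  set F : ℝ → ℝ := fun x => w' x + α * M x + β * mstar x with hFdef
  have hMcont : Continuous M := continuous_Mfun hT0 hw'cont.continuousOn mstar.continuous
  have hFcont : Continuous F := by
    apply (hw'cont.add (continuous_const.mul hMcont)).add
      (continuous_const.mul mstar.continuous)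
  -- the inner driver functions
  set gfun : ℝ → ℝ := fun s => w' s + β * mstar s with hgfun
  set hfun : ℝ → ℝ := fun s => w' s + α * M s with hhfun
  have hgcont : Continuous gfun := hw'cont.add (continuous_const.mul mstar.continuous)
  have hhcont : Continuous hfun := hw'cont.add (continuous_const.mul hMcont)
  have hMrs : ∀ t ∈ Set.Icc (0:ℝ) T, M t = sSup (gfun '' Set.Icc 0 t) / (1 - α) := by
    intro t ht
    have : M t = rsup T gfun t / (1 - α) := rfl
    rw [this, rsup, clamp_eq ht]
  have hmrs : ∀ t ∈ Set.Icc (0:ℝ) T, mstar t = sInf (hfun '' Set.Icc 0 t) / (1 - β) := by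
    intro t ht
    have h1 : mstar t = Pfun T α β w' ⇑mstar t := by
      conv_lhs => rw [← hfix]
      exact hΨcoe mstar t
    rw [h1]
    have : Pfun T α β w' ⇑mstar t = rinf T hfun t / (1 - β) := rfl
    rw [this, rinf, clamp_eq ht]
  -- running sup of F is M
  have hFsup : ∀ t ∈ Set.Icc (0:ℝ) T, sSup (F '' Set.Icc 0 t) = M t := by
    intro t ht
    have himg : F '' Set.Icc 0 t
        = (fun s => gfun s + (α / (1 - α)) * sSup (gfun '' Set.Icc 0 s)) '' Set.Icc 0 t := by
      apply Set.image_congr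
      intro s hs
      have hsT : s ∈ Set.Icc (0:ℝ) T := ⟨hs.1, hs.2.trans ht.2⟩
      rw [hFdef]
      simp only
      rw [hMrs s hsT, hgfun]
      field_simp
      try ring
    rw [himg, key_sup hT0 hα hgcont.continuousOn t ht, hMrs t ht]
  -- running inf of F is mstar
  have hFinf : ∀ t ∈ Set.Icc (0:ℝ) T, sInf (F '' Set.Icc 0 t) = mstar t := by
    intro t ht
    have himg : F '' Set.Icc 0 t
        = (fun s => hfun s + (β / (1 - β)) * sInf (hfun '' Set.Icc 0 s)) '' Set.Icc 0 t := by
      apply Set.image_congr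
      intro s hs
      have hsT : s ∈ Set.Icc (0:ℝ) T := ⟨hs.1, hs.2.trans ht.2⟩
      rw [hFdef]
      simp only
      rw [hmrs s hsT, hhfun]
      field_simp
      try ring
    rw [himg, key_inf hT0 hβ hhcont.continuousOn t ht, hmrs t ht]
  refine ⟨F, ⟨hFcont.continuousOn, ?_⟩, ?_⟩
  · intro t ht
    rw [hFsup t ht, hFinf t ht, hFdef]
    simp only
    rw [hw'eq t ht]
  · rintro g ⟨hgc, hgeq⟩
    obtain ⟨Cg, hCg⟩ : ∃ Cg, ∀ s ∈ Set.Icc (0:ℝ) T, |g s| ≤ Cg := by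
      obtain ⟨C, hC⟩ := isCompact_Icc.exists_bound_of_continuousOn hgc
      exact ⟨C, fun s hs => by simpa [Real.norm_eq_abs] using hC s hs⟩
    set mg : X := BoundedContinuousFunction.ofNormedAddCommGroup (rinf T g)
      (continuous_rinf hT0 hgc) Cg
      (fun x => by rw [Real.norm_eq_abs]; exact abs_rinf_le hT0 hgc hCg x) with hmgdef
    have hmgcoe : ∀ x, mg x = rinf T g x := fun x => rfl
    have hmgval : ∀ s ∈ Set.Icc (0:ℝ) T, mg s = sInf (g '' Set.Icc 0 s) := by
      intro s hs; rw [hmgcoe, rinf, clamp_eq hs]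
    set gw : ℝ → ℝ := fun u => w' u + β * mg u with hgwdef
    have hgwcont : Continuous gw := hw'cont.add (continuous_const.mul mg.continuous)
    have heqA : ∀ s ∈ Set.Icc (0:ℝ) T, g s = gw s + α * sSup (g '' Set.Icc 0 s) := by
      intro s hs
      rw [hgwdef]; simp only
      rw [hmgval s hs, hw'eq s hs, hgeq s hs]; ring
    have hSg := key_sup_unique hT0 hα hgwcont.continuousOn hgc heqA
    have hMg : ∀ t ∈ Set.Icc (0:ℝ) T, Mfun T α β w' ⇑mg t = sSup (g '' Set.Icc 0 t) := by
      intro t ht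
      have h0 : Mfun T α β w' ⇑mg t = rsup T gw t / (1 - α) := rfl
      rw [h0, rsup, clamp_eq ht, hSg t ht]
    set hwv : ℝ → ℝ := fun s => w' s + α * Mfun T α β w' ⇑mg s with hhwvdef
    have hhwvcont : Continuous hwv :=
      hw'cont.add (continuous_const.mul
        (continuous_Mfun hT0 hw'cont.continuousOn mg.continuous))
    have heqB : ∀ s ∈ Set.Icc (0:ℝ) T, g s = hwv s + β * sInf (g '' Set.Icc 0 s) := by
      intro s hs
      rw [hhwvdef]; simp only
      rw [hMg s hs, hw'eq s hs, hgeq s hs]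
      try ring
    have hIg := key_inf_unique hT0 hβ hhwvcont.continuousOn hgc heqB
    have hmgfix : Function.IsFixedPt Ψ mg := by
      apply BoundedContinuousFunction.ext
      intro x
      rw [hΨcoe mg x]
      have h0 : Pfun T α β w' ⇑mg x = rinf T hwv x / (1 - β) := rfl
      have hcx := clamp_mem hT0 x
      rw [h0, rinf, ← hIg (clamp T x) hcx, hmgcoe, rinf]
    have hmg_eq : mg = mstar := hcontr.fixedPoint_unique' hmgfix hfix
    intro t ht
    have hSt : sSup (g '' Set.Icc 0 t) = M t := by
      rw [← hMg t ht, hMdef, hmg_eq]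
    have hIt : sInf (g '' Set.Icc 0 t) = mstar t := by
      rw [← hmgval t ht, hmg_eq]
    rw [hgeq t ht, hSt, hIt, hFdef]
    simp only
    rw [hw'eq t ht]
end
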